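/- arXiv:2207.01247 — 2 statements merged into one kernel-verified Lean document; each statement's English description precedes it below -/
import Mathlib

section
/- Let (S,+) be a commutative discrete semigroup and let 𝒜 ⊆ 𝒫(S) satisfy conditions (1)–(3) together with: (4') for every A ∈ 𝒜 there exists B ∈ 𝒜 with B + B ⊆ A. Then T = ⋂_{A∈𝒜} cl(A) is a compact subsemigroup of βS_d. Moreover, let M be a u×v matrix with entries from ω satisfying the first entries condition, let P(M) denote the set of first entries of M, let p be an idempotent in K(T) ∩ ⋂_{A∈𝒜} ⋂_{c∈P(M)} cl(cA) where cA = {ca : a ∈ A} (ca being a added to itself c times), and let (C_n)_{n∈ℕ} be a sequence of subsets of S with C_n ∈ p for every n. Then for every A ∈ 𝒜 there exist sequences ⟨x_{1,n}⟩_{n=1}^∞, …, ⟨x_{v,n}⟩_{n=1}^∞ in S such that for every F ∈ 𝒫_f(ℕ), writing r = min F and x⃗_F = (Σ_{n∈F} x_{1,n}, …, Σ_{n∈F} x_{v,n})ᵀ, one has Σ_{n∈F} x_{i,n} ∈ A for each i ∈ {1,…,v} and M x⃗_F ∈ (C_r)^u. -/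
/- The addition on `Ultrafilter S` (Stone–Čech extension of `+`):
`A ∈ p + q ↔ {x | {y | x + y ∈ A} ∈ q} ∈ p`.
`Ultrafilter S` carries the Stone topology, so `βS_d = Ultrafilter S`. -/
attribute [local instance] Ultrafilter.add Ultrafilter.addSemigroup

set_option linter.unusedSectionVars false
set_option maxHeartbeats 1000000

namespace DHSP

variable {S : Type*} [AddCommSemigroup S]

/-- translate set: `-x + V`. -/
def trans (x : S) (V : Set S) : Set S := {y | x + y ∈ V}

lemma mem_add_iff {q r : Ultrafilter S} {V : Set S} :
    V ∈ q + r ↔ {x | trans x V ∈ r} ∈ q := by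
  have h := Ultrafilter.eventually_add q r (· ∈ V)
  simp only [Filter.eventually_iff, Ultrafilter.mem_coe] at h
  exact h

/-- star set w.r.t. an idempotent ultrafilter. -/
def star (p : Ultrafilter S) (V : Set S) : Set S := {x | x ∈ V ∧ trans x V ∈ p}

variable {p : Ultrafilter S}

lemma star_subset {V : Set S} : star p V ⊆ V := fun _ hx => hx.1

lemma star_mem (hpidem : p = p + p) {V : Set S} (hV : V ∈ p) : star p V ∈ p := by
  have h2 : V ∈ p + p := hpidem ▸ hV
  have h3 : {x | trans x V ∈ p} ∈ p := mem_add_iff.mp h2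
  have : V ∩ {x | trans x V ∈ p} ∈ p := Filter.inter_mem hV h3
  exact Filter.mem_of_superset this (fun x hx => ⟨hx.1, hx.2⟩)

lemma trans_assoc (x y : S) (V : Set S) : trans (x + y) V = trans y (trans x V) := by
  ext z
  simp only [trans, Set.mem_setOf_eq, add_assoc]

lemma trans_star_mem (hpidem : p = p + p) {V : Set S} {x : S} (hx : x ∈ star p V) :
    trans x (star p V) ∈ p := by
  have h1 : star p (trans x V) ∈ p := star_mem hpidem hx.2
  refine Filter.mem_of_superset h1 (fun y hy => ?_)
  refine ⟨hy.1, ?_⟩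
  rw [trans_assoc]
  exact hy.2

variable {𝒜 : Set (Set S)}

/-- finite intersections with a base stay in `𝒜`. -/
lemma baseInter (h2 : ∀ A ∈ 𝒜, ∀ B ∈ 𝒜, A ∩ B ∈ 𝒜) {β : Type*} (t : Finset β)
    (f : β → Set S) (hf : ∀ b ∈ t, f b ∈ 𝒜) {A₀ : Set S} (hA₀ : A₀ ∈ 𝒜) :
    A₀ ∩ ⋂ b ∈ t, f b ∈ 𝒜 := by
  classical
  induction t using Finset.induction_on with
  | empty => simpa using hA₀
  | @insert a s _ ih =>
    have h1 : A₀ ∩ ⋂ b ∈ s, f b ∈ 𝒜 := ih (fun b hbs => hf b (Finset.mem_insert_of_mem hbs))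
    have h2' := h2 _ h1 _ (hf a (Finset.mem_insert_self a s))
    have heq : (A₀ ∩ ⋂ b ∈ s, f b) ∩ f a = A₀ ∩ ⋂ b ∈ insert a s, f b := by
      ext x
      simp only [Set.mem_inter_iff, Set.mem_iInter, Finset.mem_insert]
      constructor
      · rintro ⟨⟨hx0, hxs⟩, hxa⟩
        exact ⟨hx0, fun b hb => hb.elim (fun h => h ▸ hxa) (fun h => hxs b h)⟩
      · rintro ⟨hx0, hall⟩
        exact ⟨⟨hx0, fun b hb => hall b (Or.inr hb)⟩, hall a (Or.inl rfl)⟩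
    rwa [heq] at h2'

lemma nonempty_of_memA (h1 : 𝒜.Nonempty ∧ ∅ ∉ 𝒜) {A : Set S} (hA : A ∈ 𝒜) : A.Nonempty := by
  rcases Set.eq_empty_or_nonempty A with h | h
  · exact absurd (h ▸ hA) h1.2
  · exact h

/-- sums of between 1 and `N` elements of `B` (computed in `WithZero S`) fall in `A`. -/
def SumsIn (B A : Set S) (N : ℕ) : Prop :=
  ∀ (ι : Type) (K : Finset ι) (g : ι → S), K.Nonempty → K.card ≤ N →
    (∀ t ∈ K, g t ∈ B) → ∃ s ∈ A, ∑ t ∈ K, ((g t : WithZero S)) = (s : WithZero S)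

lemma sumsIn_pow (h2 : ∀ A ∈ 𝒜, ∀ B ∈ 𝒜, A ∩ B ∈ 𝒜)
    (h4' : ∀ A ∈ 𝒜, ∃ B ∈ 𝒜, ∀ b ∈ B, ∀ b' ∈ B, b + b' ∈ A) :
    ∀ (k : ℕ), ∀ A ∈ 𝒜, ∃ B ∈ 𝒜, B ⊆ A ∧ SumsIn B A (2 ^ k) := by
  intro k
  induction k with
  | zero =>
    intro A hA
    refine ⟨A, hA, le_refl _, ?_⟩
    intro ι K g hK hcard hg
    classical
    rw [pow_zero] at hcard
    obtain ⟨t, ht⟩ := Finset.card_eq_one.mp (le_antisymm hcard hK.card_pos)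
    refine ⟨g t, hg t (ht ▸ Finset.mem_singleton_self t), ?_⟩
    rw [ht, Finset.sum_singleton]
  | succ k ih =>
    intro A hA
    obtain ⟨B₀, hB₀, hBB₀⟩ := h4' A hA
    set B₁ := B₀ ∩ A with hB₁def
    have hB₁ : B₁ ∈ 𝒜 := h2 _ hB₀ _ hA
    obtain ⟨B, hB, hBsub, hSI⟩ := ih B₁ hB₁
    refine ⟨B, hB, fun x hx => (hBsub hx).2, ?_⟩
    intro ι K g hK hcard hg
    classical
    by_cases hsmall : K.card ≤ 2 ^ k
    · obtain ⟨s, hs, hsum⟩ := hSI ι K g hK hsmall hg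
      exact ⟨s, hs.2, hsum⟩
    · push_neg at hsmall
      obtain ⟨K₁, hK₁sub, hK₁card⟩ := Finset.exists_subset_card_eq (le_of_lt hsmall)
      have hK₂ne : (K \ K₁).Nonempty := by
        rw [← Finset.card_pos, Finset.card_sdiff_of_subset hK₁sub, hK₁card]
        omega
      have hK₂card : (K \ K₁).card ≤ 2 ^ k := by
        rw [Finset.card_sdiff_of_subset hK₁sub, hK₁card]
        have : K.card ≤ 2 ^ (k + 1) := hcard
        rw [pow_succ] at this; omega
      have hK₁ne : K₁.Nonempty := by
        rw [← Finset.card_pos, hK₁card]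
        exact Nat.two_pow_pos k
      obtain ⟨s₁, hs₁, hsum₁⟩ := hSI ι K₁ g hK₁ne (le_of_eq hK₁card)
        (fun t ht => hg t (hK₁sub ht))
      obtain ⟨s₂, hs₂, hsum₂⟩ := hSI ι (K \ K₁) g hK₂ne hK₂card
        (fun t ht => hg t ((Finset.mem_sdiff.mp ht).1))
      refine ⟨s₂ + s₁, hBB₀ _ hs₂.1 _ hs₁.1, ?_⟩
      rw [← Finset.sum_sdiff hK₁sub, hsum₁, hsum₂]
      rfl

lemma exists_sumsIn (h2 : ∀ A ∈ 𝒜, ∀ B ∈ 𝒜, A ∩ B ∈ 𝒜)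
    (h4' : ∀ A ∈ 𝒜, ∃ B ∈ 𝒜, ∀ b ∈ B, ∀ b' ∈ B, b + b' ∈ A)
    {A : Set S} (hA : A ∈ 𝒜) (N : ℕ) : ∃ B ∈ 𝒜, B ⊆ A ∧ SumsIn B A N := by
  obtain ⟨B, hB, hsub, hSI⟩ := sumsIn_pow h2 h4' N A hA
  refine ⟨B, hB, hsub, ?_⟩
  intro ι K g hK hcard hg
  exact hSI ι K g hK (le_trans hcard (Nat.le_of_lt (Nat.lt_two_pow_self (n := N)))) hg

lemma SumsIn.weighted {B A : Set S} {N : ℕ} (h : SumsIn B A N) {ι : Type}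
    (K : Finset ι) (m : ι → ℕ) (g : ι → S) (hg : ∀ t ∈ K, m t ≠ 0 → g t ∈ B)
    (h0 : 0 < ∑ t ∈ K, m t) (hN : ∑ t ∈ K, m t ≤ N) :
    ∃ s ∈ A, ∑ t ∈ K, (m t) • ((g t : WithZero S)) = (s : WithZero S) := by
  classical
  set K' : Finset ((_ : ι) × ℕ) := K.sigma (fun t => Finset.range (m t)) with hK'def
  have hcard : K'.card = ∑ t ∈ K, m t := by
    rw [hK'def, Finset.card_sigma]
    simp [Finset.card_range]
  have hne : K'.Nonempty := by
    rw [← Finset.card_pos, hcard]; exact h0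
  have hsum : ∑ q ∈ K', ((g q.1 : WithZero S)) = ∑ t ∈ K, (m t) • ((g t : WithZero S)) := by
    rw [hK'def, Finset.sum_sigma]
    refine Finset.sum_congr rfl (fun t _ => ?_)
    simp [Finset.sum_const, Finset.card_range]
  obtain ⟨s, hs, hsum'⟩ := h _ K' (fun q => g q.1) hne (le_trans (le_of_eq hcard) hN)
    (by
      rintro ⟨t, i⟩ hq
      rw [hK'def, Finset.mem_sigma] at hq
      dsimp only at hq
      exact hg t hq.1 (by have := Finset.mem_range.mp hq.2; omega))
  exact ⟨s, hs, by rw [← hsum, hsum']⟩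

/-- The `p ∈ K(T)` syndeticity decomposition. -/
lemma syndetic (h1 : 𝒜.Nonempty ∧ ∅ ∉ 𝒜) (h2 : ∀ A ∈ 𝒜, ∀ B ∈ 𝒜, A ∩ B ∈ 𝒜)
    (hpK : ∀ q : Ultrafilter S, (∀ A ∈ 𝒜, A ∈ q) →
      ∃ r : Ultrafilter S, (∀ A ∈ 𝒜, A ∈ r) ∧ r + q + p = p)
    {B : Set S} (hB : B ∈ p) :
    ∃ G : Finset S, ∃ Bs ∈ 𝒜, ∀ z ∈ Bs, ∃ x ∈ G, trans (x + z) B ∈ p := by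
  classical
  -- step 1: pointwise over T
  have step1 : ∀ q : Ultrafilter S, (∀ A ∈ 𝒜, A ∈ q) →
      ∃ x : S, {z | trans (x + z) B ∈ p} ∈ q := by
    intro q hq
    obtain ⟨r, hr, hrq⟩ := hpK q hq
    have hBr : B ∈ r + q + p := by rw [hrq]; exact hB
    rw [add_assoc] at hBr
    rw [mem_add_iff] at hBr
    obtain ⟨x, hx⟩ := Ultrafilter.nonempty_of_mem hBr
    rw [Set.mem_setOf_eq, mem_add_iff] at hx
    refine ⟨x, ?_⟩
    refine Filter.mem_of_superset hx (fun z hz => ?_)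
    rw [Set.mem_setOf_eq] at hz ⊢
    rw [trans_assoc]
    exact hz
  -- step 2: finite subcover over compact T
  set T : Set (Ultrafilter S) := {q | ∀ A ∈ 𝒜, A ∈ q} with hTdef
  have hTclosed : IsClosed T := by
    have : T = ⋂ A ∈ 𝒜, {q : Ultrafilter S | A ∈ q} := by
      ext q; simp [hTdef, Set.mem_iInter]
    rw [this]
    exact isClosed_biInter (fun A _ => ultrafilter_isClosed_basic A)
  have hTcomp : IsCompact T := hTclosed.isCompact
  have hcover : T ⊆ ⋃ x : S, {q : Ultrafilter S | {z | trans (x + z) B ∈ p} ∈ q} := by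
    intro q hq
    obtain ⟨x, hx⟩ := step1 q hq
    exact Set.mem_iUnion.mpr ⟨x, hx⟩
  obtain ⟨G, hG⟩ := hTcomp.elim_finite_subcover _
    (fun x => ultrafilter_isOpen_basic _) hcover
  -- step 3: extract Bs ∈ 𝒜 inside the union
  set W : Set S := ⋃ x ∈ G, {z | trans (x + z) B ∈ p} with hWdef
  have hW : ∃ Bs ∈ 𝒜, Bs ⊆ W := by
    by_contra hcon
    push_neg at hcon
    -- build an ultrafilter in T containing Wᶜ
    set fam : Set (Set S) := 𝒜 ∪ {Wᶜ} with hfamdef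
    have hNeBot : (Filter.generate fam).NeBot := by
      rw [Filter.generate_neBot_iff]
      intro t hts htfin
      classical
      have hint : ∀ u ∈ t, u = Wᶜ ∨ u ∈ 𝒜 := by
        intro u hu
        rcases hts hu with h | h
        · exact Or.inr h
        · exact Or.inl h
      set t₁ : Set (Set S) := {u ∈ t | u ∈ 𝒜} with ht₁def
      have ht₁fin : t₁.Finite := htfin.subset (fun u hu => hu.1)
      rcases Set.eq_empty_or_nonempty t₁ with ht₁e | ht₁ne
      · -- t ⊆ {Wᶜ}
        obtain ⟨A₀, hA₀⟩ := h1.1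
        obtain ⟨z, hz⟩ := (Set.not_subset.mp (hcon A₀ hA₀))
        refine ⟨z, ?_⟩
        intro u hu
        rcases hint u hu with h | h
        · exact h ▸ hz.2
        · exact absurd (Set.eq_empty_iff_forall_notMem.mp ht₁e u ⟨hu, h⟩) (fun hh => hh)
      · obtain ⟨tf, htf⟩ := ht₁fin.exists_finset_coe
        have htfne : tf.Nonempty := by
          obtain ⟨u, hu⟩ := ht₁ne
          exact ⟨u, by rw [← Finset.mem_coe, htf]; exact hu⟩
        obtain ⟨u₀, hu₀⟩ := htfne
        have hbig : (⋂ u ∈ tf, u) ∈ 𝒜 := by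
          have := baseInter h2 tf id (fun b hb => by
            have : b ∈ t₁ := by rw [← Finset.mem_coe, htf] at hb; exact hb
            exact this.2) (by
            have : u₀ ∈ t₁ := by rw [← Finset.mem_coe, htf] at hu₀; exact hu₀
            exact this.2)
          have heq : (u₀ ∩ ⋂ b ∈ tf, id b) = ⋂ u ∈ tf, u := by
            ext x
            simp only [Set.mem_inter_iff, Set.mem_iInter, id]
            constructor
            · rintro ⟨_, hx⟩; exact hx
            · intro hx; exact ⟨hx u₀ hu₀, hx⟩
          rwa [heq] at this
        obtain ⟨z, hz⟩ := Set.not_subset.mp (hcon _ hbig)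
        refine ⟨z, fun u hu => ?_⟩
        rcases hint u hu with h | h
        · exact h ▸ hz.2
        · have : u ∈ t₁ := ⟨hu, h⟩
          have : u ∈ tf := by rw [← Finset.mem_coe, htf]; exact this
          exact Set.mem_iInter₂.mp hz.1 u this
    have q : Ultrafilter S := @Ultrafilter.of _ (Filter.generate fam) hNeBot
    have hle := @Ultrafilter.of_le _ (Filter.generate fam) hNeBot
    have hqT : (@Ultrafilter.of _ (Filter.generate fam) hNeBot) ∈ T := by
      intro A hA
      exact hle (Filter.mem_generate_of_mem (Or.inl hA))
    have hqW : Wᶜ ∈ (@Ultrafilter.of _ (Filter.generate fam) hNeBot) := by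
      exact hle (Filter.mem_generate_of_mem (Or.inr rfl))
    have := hG hqT
    rw [Set.mem_iUnion₂] at this
    obtain ⟨x, hxG, hx⟩ := this
    have hWq : W ∈ (@Ultrafilter.of _ (Filter.generate fam) hNeBot) := by
      refine Filter.mem_of_superset hx (fun z hz => ?_)
      exact Set.mem_biUnion hxG hz
    exact (Ultrafilter.compl_mem_iff_notMem.mp hqW) hWq
  obtain ⟨Bs, hBs, hBsW⟩ := hW
  refine ⟨G, Bs, hBs, fun z hz => ?_⟩
  have := hBsW hz
  rw [hWdef, Set.mem_iUnion₂] at this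
  obtain ⟨x, hxG, hx⟩ := this
  exact ⟨x, hxG, hx⟩

/-- The finitary step lemma, by induction on the number of columns. -/
lemma SL (h1 : 𝒜.Nonempty ∧ ∅ ∉ 𝒜) (h2 : ∀ A ∈ 𝒜, ∀ B ∈ 𝒜, A ∩ B ∈ 𝒜)
    (h4' : ∀ A ∈ 𝒜, ∃ B ∈ 𝒜, ∀ b ∈ B, ∀ b' ∈ B, b + b' ∈ A)
    (hpK : ∀ q : Ultrafilter S, (∀ A ∈ 𝒜, A ∈ q) →
      ∃ r : Ultrafilter S, (∀ A ∈ 𝒜, A ∈ r) ∧ r + q + p = p)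
    (hpidem : p = p + p)
    (good : ℕ → Prop)
    (hgood : ∀ A ∈ 𝒜, ∀ c : ℕ, good c →
      {x : S | ∃ a ∈ A, (x : WithZero S) = c • (a : WithZero S)} ∈ p) :
    ∀ (v : ℕ) (ρ : Type) (_ : Fintype ρ) (M : ρ → Fin v → ℕ),
      (∀ i, ∃ j, M i j ≠ 0) →
      (∀ i i' j, (M i j ≠ 0 ∧ ∀ j' < j, M i j' = 0) →
        (M i' j ≠ 0 ∧ ∀ j' < j, M i' j' = 0) → M i j = M i' j) →
      (∀ i j, (M i j ≠ 0 ∧ ∀ j' < j, M i j' = 0) → good (M i j)) →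
      ∀ 𝔄 ∈ 𝒜, ∀ E : ρ → Set S, (∀ i, E i ∈ p) →
      ∃ ξ : Fin v → S, (∀ j, ξ j ∈ 𝔄) ∧
        ∀ i, ∃ s ∈ E i, ∑ j, (M i j) • ((ξ j : WithZero S)) = (s : WithZero S) := by
  intro v
  induction v with
  | zero =>
    intro ρ _ M hMne _ _ 𝔄 h𝔄 E hE
    refine ⟨fun j => j.elim0, fun j => j.elim0, fun i => ?_⟩
    obtain ⟨j, _⟩ := hMne i
    exact j.elim0
  | succ w ihv =>
    intro ρ hρ M hMne hFE hMg 𝔄 h𝔄 E hE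
    classical
    by_cases hI : ∀ i, M i 0 = 0
    · -- zero first column
      have hMne' : ∀ i, ∃ j : Fin w, M i j.succ ≠ 0 := by
        intro i
        obtain ⟨j, hj⟩ := hMne i
        have hj0 : j ≠ 0 := fun h => hj (h ▸ hI i)
        obtain ⟨j', hj'⟩ := Fin.eq_succ_of_ne_zero hj0
        exact ⟨j', hj' ▸ hj⟩
      have hshift : ∀ (i : ρ) (j : Fin w),
          ((M i j.succ ≠ 0 ∧ ∀ j' < j, M i j'.succ = 0) ↔
           (M i j.succ ≠ 0 ∧ ∀ j' < j.succ, M i j' = 0)) := by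
        intro i j
        constructor
        · rintro ⟨hne, hz⟩
          refine ⟨hne, fun j' hj' => ?_⟩
          by_cases hj'0 : j' = 0
          · exact hj'0 ▸ hI i
          · obtain ⟨k, hk⟩ := Fin.eq_succ_of_ne_zero hj'0
            subst hk
            exact hz k (Fin.succ_lt_succ_iff.mp hj')
        · rintro ⟨hne, hz⟩
          exact ⟨hne, fun j' hj' => hz j'.succ (Fin.succ_lt_succ_iff.mpr hj')⟩
      obtain ⟨ξ', hξ'𝔄, hξ'rows⟩ := ihv ρ hρ (fun i j => M i j.succ) hMne'
        (fun i i' j hi hi' => hFE i i' j.succ ((hshift i j).mp hi) ((hshift i' j).mp hi'))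
        (fun i j hij => hMg i j.succ ((hshift i j).mp hij)) 𝔄 h𝔄 E hE
      obtain ⟨ξ₀, hξ₀⟩ := nonempty_of_memA h1 h𝔄
      refine ⟨Fin.cons ξ₀ ξ', ?_, ?_⟩
      · intro j
        refine Fin.cases ?_ ?_ j
        · simpa using hξ₀
        · intro k; simpa using hξ'𝔄 k
      · intro i
        obtain ⟨s, hs, hsum⟩ := hξ'rows i
        refine ⟨s, hs, ?_⟩
        rw [Fin.sum_univ_succ]
        simp only [Fin.cons_zero, Fin.cons_succ, hI i, zero_nsmul, zero_add]
        exact hsum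
    · -- nonzero first column
      push_neg at hI
      obtain ⟨i₀, hi₀⟩ := hI
      set c := M i₀ 0 with hcdef
      have vac : ∀ (i : ρ) (j' : Fin (w+1)), j' < 0 → M i j' = 0 :=
        fun i j' hj' => absurd hj' (Fin.not_lt_zero j')
      have hfirst : ∀ i, M i 0 ≠ 0 → M i 0 = c :=
        fun i hi => hFE i i₀ 0 ⟨hi, vac i⟩ ⟨hi₀, vac i₀⟩
      have hgoodc : good c := hMg i₀ 0 ⟨hi₀, vac i₀⟩
      -- the subtype of rows with zero first entry
      have hMne' : ∀ i : {i : ρ // M i 0 = 0}, ∃ j : Fin w, M i.1 j.succ ≠ 0 := by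
        intro i
        obtain ⟨j, hj⟩ := hMne i.1
        have hj0 : j ≠ 0 := fun h => hj (h ▸ i.2)
        obtain ⟨j', hj'⟩ := Fin.eq_succ_of_ne_zero hj0
        exact ⟨j', hj' ▸ hj⟩
      have hshift : ∀ (i : {i : ρ // M i 0 = 0}) (j : Fin w),
          ((M i.1 j.succ ≠ 0 ∧ ∀ j' < j, M i.1 j'.succ = 0) ↔
           (M i.1 j.succ ≠ 0 ∧ ∀ j' < j.succ, M i.1 j' = 0)) := by
        intro i j
        constructor
        · rintro ⟨hne, hz⟩
          refine ⟨hne, fun j' hj' => ?_⟩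
          by_cases hj'0 : j' = 0
          · exact hj'0 ▸ i.2
          · obtain ⟨k, hk⟩ := Fin.eq_succ_of_ne_zero hj'0
            subst hk
            exact hz k (Fin.succ_lt_succ_iff.mp hj')
        · rintro ⟨hne, hz⟩
          exact ⟨hne, fun j' hj' => hz j'.succ (Fin.succ_lt_succ_iff.mpr hj')⟩
      -- the p-large target set B
      set CA : Set S := {x | ∃ a ∈ 𝔄, (x : WithZero S) = c • (a : WithZero S)} with hCAdef
      have hCAp : CA ∈ p := hgood 𝔄 h𝔄 c hgoodc
      set B : Set S := CA ∩ ⋂ i : {i : ρ // M i 0 ≠ 0}, E i.1 with hBdef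
      have hBp : B ∈ p := by
        refine Filter.inter_mem hCAp ?_
        rw [Filter.iInter_mem]
        exact fun i => hE i.1
      obtain ⟨G, Bs, hBs, hGBs⟩ := syndetic h1 h2 hpK hBp
      obtain ⟨z₀, hz₀⟩ := nonempty_of_memA h1 hBs
      obtain ⟨x₀, hx₀G, _⟩ := hGBs z₀ hz₀
      obtain ⟨ι, hιF, hHJ⟩ :=
        Combinatorics.Line.exists_mono_in_high_dimension
          (Option {i : ρ // M i 0 ≠ 0}) {x // x ∈ G}
      haveI := hιF
      have hιne : Nonempty ι := by
        by_contra hcon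
        obtain ⟨l, _⟩ := hHJ (fun _ => ⟨x₀, hx₀G⟩)
        obtain ⟨i, _⟩ := l.proper
        exact hcon ⟨i⟩
      set N := Fintype.card ι with hNdef
      have hN1 : 1 ≤ N := @Fintype.card_pos ι _ hιne
      set γmax : ℕ := c + ∑ i : ρ, ∑ j, M i j with hγdef
      obtain ⟨B₁, hB₁𝒜, hB₁sub, hSIB₁⟩ := exists_sumsIn h2 h4' hBs N
      obtain ⟨𝔖₀, h𝔖₀, h𝔖₀sub, hSI𝔖₀⟩ := exists_sumsIn h2 h4' hB₁𝒜 γmax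
      obtain ⟨𝔄₁, h𝔄₁, h𝔄₁sub, hSI𝔄₁⟩ := exists_sumsIn h2 h4' h𝔄 N
      set 𝔖 : Set S := 𝔖₀ ∩ 𝔄₁ with h𝔖def
      have h𝔖𝒜 : 𝔖 ∈ 𝒜 := h2 _ h𝔖₀ _ h𝔄₁
      obtain ⟨s𝔖, hs𝔖⟩ := nonempty_of_memA h1 h𝔖𝒜
      set e : ι ≃ Fin N := Fintype.equivFin ι with hedef
      -- the window construction
      have window : ∀ n : ℕ, n ≤ N → ∃ (δ : ι → S) (η : ι → Fin w → S),
          (∀ t : ι, ((e t : ℕ) < n → (δ t ∈ 𝔖 ∧ ∀ j, η t j ∈ 𝔖))) ∧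
          (∀ (i : {i : ρ // M i 0 = 0}) (K : Finset ι), K.Nonempty →
            (∀ t ∈ K, (e t : ℕ) < n) →
            ∃ s ∈ star p (E i.1),
              ∑ t ∈ K, (∑ j, M i.1 j.succ • ((η t j : WithZero S))) = (s : WithZero S)) := by
        intro n
        induction n with
        | zero =>
          intro _
          refine ⟨fun _ => s𝔖, fun _ _ => s𝔖, fun t ht => absurd ht (by omega), ?_⟩
          intro i K hK hKb
          obtain ⟨t, ht⟩ := hK
          exact absurd (hKb t ht) (by omega)
        | succ n ihn =>
          intro hn
          obtain ⟨δ, η, hmem, hrows⟩ := ihn (by omega)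
          set tstar : ι := e.symm ⟨n, by omega⟩ with htstardef
          -- the p-large targets for the new tuple
          set 𝒦 : Finset (Finset ι) :=
            Finset.univ.powerset.filter (fun K => K.Nonempty ∧ ∀ t ∈ K, (e t : ℕ) < n)
            with h𝒦def
          set TK : {i : ρ // M i 0 = 0} → Finset ι → Set S := fun i K =>
            {y : S | ∃ s' ∈ star p (E i.1),
              (∑ t ∈ K, (∑ j, M i.1 j.succ • ((η t j : WithZero S)))) + (y : WithZero S)
                = (s' : WithZero S)} with hTKdef
          have hEtar : ∀ i : {i : ρ // M i 0 = 0},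
              (star p (E i.1) ∩ ⋂ K ∈ 𝒦, TK i K) ∈ p := by
            intro i
            refine Filter.inter_mem (star_mem hpidem (hE i.1)) ?_
            rw [Filter.biInter_finset_mem]
            intro K hK
            rw [h𝒦def, Finset.mem_filter] at hK
            obtain ⟨s, hs, hsum⟩ := hrows i K hK.2.1 hK.2.2
            refine Filter.mem_of_superset (trans_star_mem hpidem hs) ?_
            intro y hy
            refine ⟨s + y, hy, ?_⟩
            rw [hsum]
            rfl
          obtain ⟨ηnew, hηnew𝔖, hηnewrows⟩ := ihv {i : ρ // M i 0 = 0}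
            (Subtype.fintype _) (fun i j => M i.1 j.succ) hMne'
            (fun i i' j hi hi' => hFE i.1 i'.1 j.succ ((hshift i j).mp hi) ((hshift i' j).mp hi'))
            (fun i j hij => hMg i.1 j.succ ((hshift i j).mp hij))
            𝔖 h𝔖𝒜 (fun i => star p (E i.1) ∩ ⋂ K ∈ 𝒦, TK i K) hEtar
          refine ⟨Function.update δ tstar s𝔖, Function.update η tstar ηnew, ?_, ?_⟩
          · intro t ht
            by_cases htt : t = tstar
            · subst htt
              simp only [Function.update_self]
              exact ⟨hs𝔖, hηnew𝔖⟩
            · simp only [Function.update_of_ne htt]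
              refine hmem t ?_
              have : (e t : ℕ) ≠ n := by
                intro hh
                apply htt
                have : e t = ⟨n, by omega⟩ := Fin.ext hh
                rw [htstardef, ← this, Equiv.symm_apply_apply]
              omega
          · intro i K hK hKb
            by_cases htK : tstar ∈ K
            · set K' := K.erase tstar with hK'def
              have hK'val : ∀ t ∈ K', Function.update η tstar ηnew t = η t := by
                intro t ht
                exact Function.update_of_ne (Finset.ne_of_mem_erase ht) _ _
              have hK'b : ∀ t ∈ K', (e t : ℕ) < n := by
                intro t ht
                have h1' := hKb t (Finset.mem_of_mem_erase ht)
                have h2' : (e t : ℕ) ≠ n := by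
                  intro hh
                  apply Finset.ne_of_mem_erase ht
                  have : e t = ⟨n, by omega⟩ := Fin.ext hh
                  rw [htstardef, ← this, Equiv.symm_apply_apply]
                omega
              obtain ⟨si, hsi, hsisum⟩ := hηnewrows i
              have hvalstar : ∑ j, M i.1 j.succ •
                  ((Function.update η tstar ηnew tstar j : WithZero S)) = (si : WithZero S) := by
                simp only [Function.update_self]
                exact hsisum
              rcases K'.eq_empty_or_nonempty with hK'e | hK'ne
              · have hKsing : K = {tstar} := by
                  apply Finset.eq_singleton_iff_unique_mem.mpr
                  refine ⟨htK, fun x hx => ?_⟩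
                  by_contra hxne
                  have : x ∈ K' := Finset.mem_erase.mpr ⟨hxne, hx⟩
                  rw [hK'e] at this
                  exact absurd this (Finset.notMem_empty x)
                refine ⟨si, hsi.1, ?_⟩
                rw [hKsing, Finset.sum_singleton]
                exact hvalstar
              · obtain ⟨s, hs, hsum⟩ := hrows i K' hK'ne hK'b
                have hsum' : ∑ t ∈ K', (∑ j, M i.1 j.succ •
                    ((Function.update η tstar ηnew t j : WithZero S))) = (s : WithZero S) := by
                  rw [← hsum]
                  refine Finset.sum_congr rfl (fun t ht => ?_)
                  rw [hK'val t ht]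
                have hK'𝒦 : K' ∈ 𝒦 := by
                  rw [h𝒦def, Finset.mem_filter]
                  exact ⟨Finset.mem_powerset.mpr (Finset.subset_univ _), hK'ne, hK'b⟩
                have hsiTK : si ∈ TK i K' := by
                  have := hsi.2
                  rw [Set.mem_iInter₂] at this
                  exact this K' hK'𝒦
                obtain ⟨s', hs', heq⟩ := hsiTK
                refine ⟨s', hs', ?_⟩
                rw [← Finset.sum_erase_add K _ htK, ← hK'def, hsum', hvalstar]
                rw [hsum] at heq
                exact heq
            · -- tstar ∉ K : old invariant
              have hKb' : ∀ t ∈ K, (e t : ℕ) < n := by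
                intro t ht
                have h1' := hKb t ht
                have h2' : (e t : ℕ) ≠ n := by
                  intro hh
                  apply htK
                  have : e t = ⟨n, by omega⟩ := Fin.ext hh
                  have : t = tstar := by rw [htstardef, ← this, Equiv.symm_apply_apply]
                  exact this ▸ ht
                omega
              obtain ⟨s, hs, hsum⟩ := hrows i K hK hKb'
              refine ⟨s, hs, ?_⟩
              rw [← hsum]
              refine Finset.sum_congr rfl (fun t ht => ?_)
              have : t ≠ tstar := fun hh => htK (hh ▸ ht)
              rw [Function.update_of_ne this]
      obtain ⟨δf, ηf, hmemf, hrowsf⟩ := window N (le_refl N)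
      have hmemf' : ∀ t : ι, δf t ∈ 𝔖 ∧ ∀ j, ηf t j ∈ 𝔖 :=
        fun t => hmemf t (e t).isLt
      haveI := hιne
      have coeadd : ∀ a b : S, ((a + b : S) : WithZero S) = (a : WithZero S) + (b : WithZero S) :=
        fun _ _ => rfl
      have hc0 : c ≠ 0 := hi₀
      -- letter values and word values
      set YR : Option {i : ρ // M i 0 ≠ 0} → ι → WithZero S := fun o t =>
        c • ((δf t : WithZero S)) +
          Option.elim o 0 (fun i => ∑ j, M i.1 j.succ • ((ηf t j : WithZero S))) with hYRdef
      set σR : (ι → Option {i : ρ // M i 0 ≠ 0}) → WithZero S := fun ww =>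
        ∑ t, YR (ww t) t with hσRdef
      have hterm : ∀ (o : Option {i : ρ // M i 0 ≠ 0}) (t : ι), ∃ s ∈ B₁, YR o t = ↑s := by
        intro o t
        set mwt : Option (Fin w) → ℕ := fun oj =>
          Option.elim oj c (fun j => Option.elim o 0 (fun i => M i.1 j.succ)) with hmwtdef
        set gv : Option (Fin w) → S := fun oj => Option.elim oj (δf t) (fun j => ηf t j)
          with hgvdef
        have hYR : YR o t = ∑ oj ∈ Finset.univ, (mwt oj) • ((gv oj : WithZero S)) := by
          rw [show (∑ oj ∈ Finset.univ, (mwt oj) • ((gv oj : WithZero S)))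
              = ∑ oj : Option (Fin w), (mwt oj) • ((gv oj : WithZero S)) from rfl,
            Fintype.sum_option]
          cases o with
          | none => simp [hYRdef, hmwtdef, hgvdef]
          | some i => simp [hYRdef, hmwtdef, hgvdef]
        have hwtsum : ∑ oj ∈ Finset.univ, mwt oj
            = c + Option.elim o 0 (fun (i : {i : ρ // M i 0 ≠ 0}) => ∑ j : Fin w, M i.1 j.succ) := by
          rw [show (∑ oj ∈ Finset.univ, mwt oj) = ∑ oj : Option (Fin w), mwt oj from rfl,
            Fintype.sum_option]
          cases o with
          | none => simp [hmwtdef]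
          | some i => simp [hmwtdef]
        have hwtpos : 0 < ∑ oj ∈ Finset.univ, mwt oj := by
          rw [hwtsum]
          have : 0 < c := Nat.pos_of_ne_zero hc0
          omega
        have hwtle : ∑ oj ∈ Finset.univ, mwt oj ≤ γmax := by
          rw [hwtsum, hγdef]
          have hX : Option.elim o 0 (fun (i : {i : ρ // M i 0 ≠ 0}) => ∑ j : Fin w, M i.1 j.succ) ≤ ∑ i : ρ, ∑ j, M i j := by
            cases o with
            | none => simp
            | some i =>
              have h1' : (∑ j : Fin w, M i.1 j.succ) ≤ ∑ j : Fin (w+1), M i.1 j := by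
                rw [Fin.sum_univ_succ]
                omega
              have h2' : (∑ j : Fin (w+1), M i.1 j) ≤ ∑ i' : ρ, ∑ j, M i' j :=
                Finset.single_le_sum (f := fun i' : ρ => ∑ j : Fin (w+1), M i' j)
                  (fun i' _ => Nat.zero_le _) (Finset.mem_univ i.1)
              simpa using le_trans h1' h2'
          omega
        obtain ⟨s, hs, hsum⟩ := hSI𝔖₀.weighted Finset.univ mwt gv
          (by
            rintro (_ | j) _ hne
            · exact (hmemf' t).1.1
            · exact ((hmemf' t).2 j).1)
          hwtpos hwtle
        exact ⟨s, hs, by rw [hYR]; exact hsum⟩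
      choose sY hsYB hsYeq using hterm
      have hword : ∀ ww : ι → Option {i : ρ // M i 0 ≠ 0}, ∃ s ∈ Bs, σR ww = ↑s := by
        intro ww
        obtain ⟨s, hs, hsum⟩ := hSIB₁ ι Finset.univ (fun t => sY (ww t) t)
          Finset.univ_nonempty (le_of_eq (Finset.card_univ.trans hNdef.symm))
          (fun t _ => hsYB (ww t) t)
        refine ⟨s, hs, ?_⟩
        rw [hσRdef, ← hsum]
        exact Finset.sum_congr rfl (fun t _ => hsYeq (ww t) t)
      choose sw hswBs hsweq using hword
      have hxw : ∀ ww, ∃ x, x ∈ G ∧ trans (x + sw ww) B ∈ p :=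
        fun ww => hGBs _ (hswBs ww)
      choose xw hxwG hxwp using hxw
      have hZ : (⋂ ww : ι → Option {i : ρ // M i 0 ≠ 0}, trans (xw ww + sw ww) B) ∈ p := by
        rw [← Ultrafilter.mem_coe, Filter.iInter_mem]
        exact hxwp
      obtain ⟨z, hzmem⟩ := Ultrafilter.nonempty_of_mem hZ
      have hz : ∀ ww, (xw ww + sw ww) + z ∈ B :=
        fun ww => Set.mem_iInter.mp hzmem ww
      obtain ⟨l, xbarm, hmono⟩ := hHJ (fun ww => (⟨xw ww, hxwG ww⟩ : {x // x ∈ G}))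
      set xbar := (xbarm : S) with hxbardef
      have hxweq : ∀ o, xw (l o) = xbar := fun o => congrArg Subtype.val (hmono o)
      set P : Option {i : ρ // M i 0 ≠ 0} → S := fun o => xbar + sw (l o) + z with hPdef
      have hPB : ∀ o, P o ∈ B := by
        intro o
        have h := hz (l o)
        rw [hxweq o] at h
        exact h
      set Hvar : Finset ι := Finset.univ.filter (fun t => l.idxFun t = none) with hHvardef
      have hHvar : Hvar.Nonempty := by
        obtain ⟨t, ht⟩ := l.proper
        exact ⟨t, Finset.mem_filter.mpr ⟨Finset.mem_univ t, ht⟩⟩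
      have happly_var : ∀ (o) (t), t ∈ Hvar → (l o) t = o := by
        intro o t ht
        have h := (Finset.mem_filter.mp ht).2
        show (l.idxFun t).getD o = o
        rw [h]
        rfl
      have happly_fix : ∀ (o o' : Option {i : ρ // M i 0 ≠ 0}) (t), t ∉ Hvar →
          (l o) t = (l o') t := by
        intro o o' t ht
        have h : ¬ l.idxFun t = none := by
          intro hh
          exact ht (Finset.mem_filter.mpr ⟨Finset.mem_univ t, hh⟩)
        obtain ⟨a, ha⟩ := Option.ne_none_iff_exists'.mp h
        show (l.idxFun t).getD o = (l.idxFun t).getD o'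
        rw [ha]
        rfl
      have hsplit : ∀ o, σR (l o)
          = (∑ t ∈ Finset.univ \ Hvar, YR ((l o) t) t) + ∑ t ∈ Hvar, YR o t := by
        intro o
        have h0 : σR (l o) = ∑ t ∈ Finset.univ, YR ((l o) t) t := rfl
        rw [h0, ← Finset.sum_sdiff (Finset.subset_univ Hvar)]
        congr 1
        exact Finset.sum_congr rfl (fun t ht => by rw [happly_var o t ht])
      have hId1 : ∀ i : {i : ρ // M i 0 ≠ 0}, σR (l (some i))
          = σR (l none) + ∑ t ∈ Hvar, ∑ j, M i.1 j.succ • ((ηf t j : WithZero S)) := by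
        intro i
        rw [hsplit (some i), hsplit none]
        have hfixeq : (∑ t ∈ Finset.univ \ Hvar, YR ((l (some i)) t) t)
            = ∑ t ∈ Finset.univ \ Hvar, YR ((l none) t) t := by
          refine Finset.sum_congr rfl (fun t ht => ?_)
          rw [happly_fix (some i) none t (Finset.mem_sdiff.mp ht).2]
        rw [hfixeq]
        have hvareq : (∑ t ∈ Hvar, YR (some i) t)
            = (∑ t ∈ Hvar, YR none t)
              + ∑ t ∈ Hvar, ∑ j, M i.1 j.succ • ((ηf t j : WithZero S)) := by
          rw [← Finset.sum_add_distrib]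
          refine Finset.sum_congr rfl (fun t _ => ?_)
          simp [hYRdef]
        rw [hvareq, add_assoc]
      have hcol : ∀ j : Fin w, ∃ s ∈ 𝔄, ∑ t ∈ Hvar, ((ηf t j : WithZero S)) = ↑s := by
        intro j
        refine hSI𝔄₁ ι Hvar (fun t => ηf t j) hHvar ?_ (fun t _ => ((hmemf' t).2 j).2)
        exact le_trans (Finset.card_filter_le _ _) (le_of_eq Finset.card_univ)
      choose ξ' hξ'𝔄 hξ'sum using hcol
      obtain ⟨ξ₀, hξ₀𝔄, hβ⟩ := (hPB none).1
      have hswap : ∀ i : ρ, ∑ j : Fin w, M i j.succ • ((ξ' j : WithZero S))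
          = ∑ t ∈ Hvar, ∑ j : Fin w, M i j.succ • ((ηf t j : WithZero S)) := by
        intro i
        have h1' : ∀ j : Fin w, ((ξ' j : WithZero S)) = ∑ t ∈ Hvar, ((ηf t j : WithZero S)) :=
          fun j => (hξ'sum j).symm
        calc ∑ j : Fin w, M i j.succ • ((ξ' j : WithZero S))
            = ∑ j : Fin w, M i j.succ • ∑ t ∈ Hvar, ((ηf t j : WithZero S)) := by
              refine Finset.sum_congr rfl (fun j _ => ?_)
              rw [h1' j]
          _ = ∑ j : Fin w, ∑ t ∈ Hvar, M i j.succ • ((ηf t j : WithZero S)) := by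
              refine Finset.sum_congr rfl (fun j _ => ?_)
              rw [Finset.smul_sum]
          _ = ∑ t ∈ Hvar, ∑ j : Fin w, M i j.succ • ((ηf t j : WithZero S)) :=
              Finset.sum_comm
      refine ⟨Fin.cons ξ₀ ξ', ?_, ?_⟩
      · intro j
        refine Fin.cases ?_ ?_ j
        · simpa using hξ₀𝔄
        · intro k
          simpa using hξ'𝔄 k
      · intro i
        by_cases hi0 : M i 0 = 0
        · obtain ⟨s, hs, hsum⟩ := hrowsf ⟨i, hi0⟩ Hvar hHvar (fun t _ => (e t).isLt)
          refine ⟨s, star_subset hs, ?_⟩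
          rw [Fin.sum_univ_succ]
          simp only [Fin.cons_zero, Fin.cons_succ, hi0, zero_nsmul, zero_add]
          rw [hswap i]
          exact hsum
        · have hic : M i 0 = c := hfirst i hi0
          have hPmem : P (some ⟨i, hi0⟩) ∈ E i := by
            have h := (hPB (some ⟨i, hi0⟩)).2
            rw [Set.mem_iInter] at h
            exact h ⟨i, hi0⟩
          refine ⟨P (some ⟨i, hi0⟩), hPmem, ?_⟩
          rw [Fin.sum_univ_succ]
          simp only [Fin.cons_zero, Fin.cons_succ, hic]
          rw [hswap i]
          rw [← hβ]
          have hkey : ((sw (l (some ⟨i, hi0⟩)) : S) : WithZero S)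
              = ((sw (l none) : S) : WithZero S)
                + ∑ t ∈ Hvar, ∑ j, M i j.succ • ((ηf t j : WithZero S)) := by
            rw [← hsweq, ← hsweq, hId1 ⟨i, hi0⟩]
          calc ((P none : S) : WithZero S)
              + ∑ t ∈ Hvar, ∑ j, M i j.succ • ((ηf t j : WithZero S))
              = ((xbar : WithZero S) + (sw (l none) : WithZero S) + (z : WithZero S))
                + ∑ t ∈ Hvar, ∑ j, M i j.succ • ((ηf t j : WithZero S)) := rfl
            _ = (xbar : WithZero S) + (((sw (l none) : S) : WithZero S)
                + ∑ t ∈ Hvar, ∑ j, M i j.succ • ((ηf t j : WithZero S))) + (z : WithZero S) := by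
                abel
            _ = (xbar : WithZero S) + ((sw (l (some ⟨i, hi0⟩)) : S) : WithZero S)
                + (z : WithZero S) := by
                rw [← hkey]
            _ = ((P (some ⟨i, hi0⟩) : S) : WithZero S) := rfl

lemma min'_erase_eq {K : Finset ℕ} {n : ℕ} (hn : n ∈ K) (hK : K.Nonempty)
    (hK' : (K.erase n).Nonempty) (hb : ∀ k ∈ K.erase n, k < n) :
    K.min' hK = (K.erase n).min' hK' := by
  apply le_antisymm
  · exact Finset.min'_le K _ (Finset.mem_of_mem_erase (Finset.min'_mem _ hK'))
  · have hmem := Finset.min'_mem K hK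
    by_cases h : K.min' hK = n
    · exfalso
      have h1' := Finset.min'_le K ((K.erase n).min' hK')
        (Finset.mem_of_mem_erase (Finset.min'_mem _ hK'))
      have h2' := hb _ (Finset.min'_mem _ hK')
      omega
    · exact Finset.min'_le _ _ (Finset.mem_erase.mpr ⟨h, hmem⟩)

/-- The infinite recursion: the main construction. -/
lemma main_construction (h1 : 𝒜.Nonempty ∧ ∅ ∉ 𝒜)
    (h2 : ∀ A ∈ 𝒜, ∀ B ∈ 𝒜, A ∩ B ∈ 𝒜)
    (h3 : ∀ A ∈ 𝒜, ∀ a ∈ A, ∃ B ∈ 𝒜, ∀ b ∈ B, a + b ∈ A)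
    (h4' : ∀ A ∈ 𝒜, ∃ B ∈ 𝒜, ∀ b ∈ B, ∀ b' ∈ B, b + b' ∈ A)
    (hpK : ∀ q : Ultrafilter S, (∀ A ∈ 𝒜, A ∈ q) →
      ∃ r : Ultrafilter S, (∀ A ∈ 𝒜, A ∈ r) ∧ r + q + p = p)
    (hpidem : p = p + p)
    (good : ℕ → Prop)
    (hgood : ∀ A ∈ 𝒜, ∀ c : ℕ, good c →
      {x : S | ∃ a ∈ A, (x : WithZero S) = c • (a : WithZero S)} ∈ p)
    (v : ℕ) (ρ : Type) (hρ : Fintype ρ) (M : ρ → Fin v → ℕ)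
    (hMne : ∀ i, ∃ j, M i j ≠ 0)
    (hFE : ∀ i i' j, (M i j ≠ 0 ∧ ∀ j' < j, M i j' = 0) →
        (M i' j ≠ 0 ∧ ∀ j' < j, M i' j' = 0) → M i j = M i' j)
    (hMg : ∀ i j, (M i j ≠ 0 ∧ ∀ j' < j, M i j' = 0) → good (M i j))
    (C : ℕ → Set S) (hC : ∀ n, C n ∈ p)
    {A : Set S} (hA : A ∈ 𝒜) :
    ∃ x : Fin v → ℕ → S,
      ∀ F : Finset ℕ, ∀ hF : F.Nonempty,
        (∀ j : Fin v, ∃ s ∈ A, ∑ n ∈ F, ((x j n : WithZero S)) = (s : WithZero S)) ∧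
        (∀ i : ρ, ∃ s ∈ C (F.min' hF),
          ∑ n ∈ F, ∑ j, M i j • ((x j n : WithZero S)) = (s : WithZero S)) := by
  classical
  set Dp : ℕ → Set S := fun n => ⋂ k ∈ Finset.range (n+1), C k with hDpdef
  have hDp : ∀ n, Dp n ∈ p := by
    intro n
    rw [hDpdef, ← Ultrafilter.mem_coe, Filter.biInter_finset_mem]
    exact fun k _ => hC k
  have hDpsub : ∀ n, Dp n ⊆ C n := by
    intro n
    intro x hx
    exact Set.mem_iInter₂.mp hx n (Finset.self_mem_range_succ n)
  obtain ⟨a₀, ha₀⟩ := nonempty_of_memA h1 hA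
  -- the invariant
  set Inv : ℕ → ((ℕ → Fin v → S) × Set S) → Prop := fun n st =>
    st.2 ∈ 𝒜 ∧ st.2 ⊆ A ∧
    (∀ (j : Fin v) (K : Finset ℕ), K.Nonempty → (∀ k ∈ K, k < n) →
      ∃ s ∈ A, (∑ k ∈ K, ((st.1 k j : WithZero S)) = (s : WithZero S)) ∧
        ∀ b ∈ st.2, s + b ∈ A) ∧
    (∀ (i : ρ) (K : Finset ℕ) (hK : K.Nonempty), (∀ k ∈ K, k < n) →
      ∃ s ∈ star p (Dp (K.min' hK)),
        ∑ k ∈ K, ∑ j, M i j • ((st.1 k j : WithZero S)) = (s : WithZero S)) with hInvdef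
  -- the step
  have hstepex : ∀ n st, Inv n st → ∃ st',
      (∀ m, m < n → st'.1 m = st.1 m) ∧ st'.2 ⊆ st.2 ∧ Inv (n+1) st' := by
    intro n st hinv
    obtain ⟨hst𝒜, hstA, hcols, hrows⟩ := hinv
    set 𝒦 : Finset (Finset ℕ) := (Finset.range n).powerset.filter (fun K => K.Nonempty)
      with h𝒦def
    have h𝒦mem : ∀ K ∈ 𝒦, K.Nonempty ∧ ∀ k ∈ K, k < n := by
      intro K hK
      rw [h𝒦def, Finset.mem_filter, Finset.mem_powerset] at hK
      exact ⟨hK.2, fun k hk => Finset.mem_range.mp (hK.1 hk)⟩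
    set TK : ρ → Finset ℕ → Set S := fun i K =>
      {y : S | ∀ hK : K.Nonempty, ∃ s' ∈ star p (Dp (K.min' hK)),
        (∑ k ∈ K, ∑ j, M i j • ((st.1 k j : WithZero S))) + (y : WithZero S)
          = (s' : WithZero S)} with hTKdef
    have hEtar : ∀ i : ρ, (star p (Dp n) ∩ ⋂ K ∈ 𝒦, TK i K) ∈ p := by
      intro i
      refine Filter.inter_mem (star_mem hpidem (hDp n)) ?_
      rw [Filter.biInter_finset_mem]
      intro K hK
      obtain ⟨hKne, hKb⟩ := h𝒦mem K hK
      obtain ⟨s, hs, hsum⟩ := hrows i K hKne hKb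
      refine Filter.mem_of_superset (trans_star_mem hpidem hs) ?_
      intro y hy
      intro hK'
      exact ⟨s + y, hy, by rw [hsum]; rfl⟩
    obtain ⟨ξ, hξmem, hξrows⟩ := SL h1 h2 h4' hpK hpidem good hgood v ρ hρ M hMne hFE hMg
      st.2 hst𝒜 (fun i => star p (Dp n) ∩ ⋂ K ∈ 𝒦, TK i K) hEtar
    set xs' : ℕ → Fin v → S := fun k => if k = n then ξ else st.1 k with hxs'def
    have hxs'old : ∀ k, k ≠ n → xs' k = st.1 k := fun k hk => by
      rw [hxs'def]; simp [hk]
    have hxs'new : xs' n = ξ := by rw [hxs'def]; simp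
    -- new column sums
    set 𝒦' : Finset (Finset ℕ) := (Finset.range (n+1)).powerset.filter
      (fun K => K.Nonempty ∧ n ∈ K) with h𝒦'def
    have hnewA : ∀ (j : Fin v), ∀ K ∈ 𝒦', ∃ s, s ∈ A ∧
        (∑ k ∈ K, ((xs' k j : WithZero S)) = (s : WithZero S)) := by
      intro j K hK
      rw [h𝒦'def, Finset.mem_filter, Finset.mem_powerset] at hK
      obtain ⟨hKsub, hKne, hnK⟩ := hK
      set K' := K.erase n with hK'def
      have hK'val : ∑ k ∈ K', ((xs' k j : WithZero S)) = ∑ k ∈ K', ((st.1 k j : WithZero S)) :=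
        Finset.sum_congr rfl (fun k hk => by rw [hxs'old k (Finset.ne_of_mem_erase hk)])
      rcases K'.eq_empty_or_nonempty with hK'e | hK'ne
      · have hKsing : K = {n} := by
          apply Finset.eq_singleton_iff_unique_mem.mpr
          refine ⟨hnK, fun x hx => ?_⟩
          by_contra hxne
          have : x ∈ K' := Finset.mem_erase.mpr ⟨hxne, hx⟩
          rw [hK'e] at this
          exact absurd this (Finset.notMem_empty x)
        refine ⟨ξ j, hstA (hξmem j), ?_⟩
        rw [hKsing, Finset.sum_singleton, hxs'new]
      · have hK'b : ∀ k ∈ K', k < n := by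
          intro k hk
          have h1' := Finset.mem_range.mp (hKsub (Finset.mem_of_mem_erase hk))
          have h2' := Finset.ne_of_mem_erase hk
          omega
        obtain ⟨s, hsA, hsum, habs⟩ := hcols j K' hK'ne hK'b
        refine ⟨s + ξ j, habs _ (hξmem j), ?_⟩
        rw [← Finset.sum_erase_add K _ hnK, ← hK'def, hK'val, hsum, hxs'new]
        rfl
    choose snew hsnewA hsnewEq using hnewA
    have habs3 : ∀ (j : Fin v), ∀ (K : {K // K ∈ 𝒦'}), ∃ B' ∈ 𝒜,
        ∀ b ∈ B', snew j K.1 K.2 + b ∈ A :=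
      fun j K => h3 A hA _ (hsnewA j K.1 K.2)
    choose Bnew hBnew𝒜 hBnewabs using habs3
    set 𝔄' : Set S := st.2 ∩ ⋂ q ∈ (Finset.univ : Finset (Fin v × {K // K ∈ 𝒦'})),
      Bnew q.1 q.2 with h𝔄'def
    have h𝔄'𝒜 : 𝔄' ∈ 𝒜 := baseInter h2 _ _ (fun q _ => hBnew𝒜 q.1 q.2) hst𝒜
    have h𝔄'sub : 𝔄' ⊆ st.2 := fun b hb => hb.1
    refine ⟨(xs', 𝔄'), fun m hm => hxs'old m (by omega), h𝔄'sub, h𝔄'𝒜, fun b hb => hstA (hb.1),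
      ?_, ?_⟩
    · -- columns
      intro j K hKne hKb
      by_cases hnK : n ∈ K
      · have hK𝒦' : K ∈ 𝒦' := by
          rw [h𝒦'def, Finset.mem_filter, Finset.mem_powerset]
          exact ⟨fun k hk => Finset.mem_range.mpr (hKb k hk), hKne, hnK⟩
        refine ⟨snew j K hK𝒦', hsnewA j K hK𝒦', hsnewEq j K hK𝒦', ?_⟩
        intro b hb
        have hbB : b ∈ Bnew j ⟨K, hK𝒦'⟩ := by
          have := hb.2
          rw [Set.mem_iInter₂] at this
          exact this (j, ⟨K, hK𝒦'⟩) (Finset.mem_univ _)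
        exact hBnewabs j ⟨K, hK𝒦'⟩ b hbB
      · have hKb' : ∀ k ∈ K, k < n := by
          intro k hk
          have := hKb k hk
          have : k ≠ n := fun hh => hnK (hh ▸ hk)
          omega
        obtain ⟨s, hsA, hsum, habs⟩ := hcols j K hKne hKb'
        refine ⟨s, hsA, ?_, fun b hb => habs b (h𝔄'sub hb)⟩
        rw [← hsum]
        exact Finset.sum_congr rfl (fun k hk =>
          congrArg _ (congrFun (hxs'old k (fun hh => hnK (hh ▸ hk))) j))
    · -- rows
      intro i K hKne hKb
      by_cases hnK : n ∈ K
      · obtain ⟨si, hsi, hsiEq⟩ := hξrows i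
        have hvalnew : ∑ j, M i j • ((xs' n j : WithZero S)) = (si : WithZero S) := by
          rw [hxs'new]; exact hsiEq
        set K' := K.erase n with hK'def
        have hK'val : ∑ k ∈ K', ∑ j, M i j • ((xs' k j : WithZero S))
            = ∑ k ∈ K', ∑ j, M i j • ((st.1 k j : WithZero S)) :=
          Finset.sum_congr rfl (fun k hk => by rw [hxs'old k (Finset.ne_of_mem_erase hk)])
        rcases K'.eq_empty_or_nonempty with hK'e | hK'ne
        · have hKsing : K = {n} := by
            apply Finset.eq_singleton_iff_unique_mem.mpr
            refine ⟨hnK, fun x hx => ?_⟩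
            by_contra hxne
            have : x ∈ K' := Finset.mem_erase.mpr ⟨hxne, hx⟩
            rw [hK'e] at this
            exact absurd this (Finset.notMem_empty x)
          have huniq : ∀ x ∈ K, x = n := by
            intro x hx
            rw [hKsing] at hx
            exact Finset.mem_singleton.mp hx
          have hmin : K.min' hKne = n :=
            le_antisymm (Finset.min'_le K n hnK)
              (Finset.le_min' _ _ _ (fun y hy => le_of_eq (huniq y hy).symm))
          refine ⟨si, ?_, ?_⟩
          · rw [hmin]
            exact hsi.1
          · rw [hKsing, Finset.sum_singleton, hvalnew]
        · have hK'b : ∀ k ∈ K', k < n := by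
            intro k hk
            have h1' := hKb k (Finset.mem_of_mem_erase hk)
            have h2' := Finset.ne_of_mem_erase hk
            omega
          have hK'𝒦 : K' ∈ 𝒦 := by
            rw [h𝒦def, Finset.mem_filter, Finset.mem_powerset]
            exact ⟨fun k hk => Finset.mem_range.mpr (hK'b k hk), hK'ne⟩
          have hsiTK : si ∈ TK i K' := by
            have := hsi.2
            rw [Set.mem_iInter₂] at this
            exact this K' hK'𝒦
          obtain ⟨s', hs', heq⟩ := hsiTK hK'ne
          obtain ⟨s, hs, hsum⟩ := hrows i K' hK'ne hK'b
          have hmin : K.min' hKne = K'.min' hK'ne := min'_erase_eq hnK hKne hK'ne hK'b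
          refine ⟨s', ?_, ?_⟩
          · rw [hmin]
            exact hs'
          · rw [← Finset.sum_erase_add K _ hnK, ← hK'def, hK'val, hvalnew]
            exact heq
      · have hKb' : ∀ k ∈ K, k < n := by
          intro k hk
          have := hKb k hk
          have : k ≠ n := fun hh => hnK (hh ▸ hk)
          omega
        obtain ⟨s, hs, hsum⟩ := hrows i K hKne hKb'
        refine ⟨s, hs, ?_⟩
        rw [← hsum]
        refine Finset.sum_congr rfl (fun k hk => ?_)
        refine Finset.sum_congr rfl (fun j _ => ?_)
        exact congrArg _ (congrArg _ (congrFun (hxs'old k (fun hh => hnK (hh ▸ hk))) j))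
  -- iterate
  have hinv0 : Inv 0 (fun _ _ => a₀, A) := by
    refine ⟨hA, le_refl A, ?_, ?_⟩
    · intro j K hKne hKb
      obtain ⟨k, hk⟩ := hKne
      exact absurd (hKb k hk) (by omega)
    · intro i K hKne hKb
      obtain ⟨k, hk⟩ := hKne
      exact absurd (hKb k hk) (by omega)
  let g : ∀ n : ℕ, {st : (ℕ → Fin v → S) × Set S // Inv n st} := fun n =>
    Nat.rec ⟨(fun _ _ => a₀, A), hinv0⟩
      (fun n prev => ⟨(hstepex n prev.1 prev.2).choose,
        (hstepex n prev.1 prev.2).choose_spec.2.2⟩) n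
  have hgstep : ∀ n, ∀ m, m < n → (g (n+1)).1.1 m = (g n).1.1 m := by
    intro n m hm
    exact (hstepex n (g n).1 (g n).2).choose_spec.1 m hm
  set x : Fin v → ℕ → S := fun j k => (g (k+1)).1.1 k j with hxdef
  have hstab : ∀ n k, k < n → ∀ j, (g n).1.1 k j = x j k := by
    intro n
    induction n with
    | zero => intro k hk; omega
    | succ n ih =>
      intro k hk j
      by_cases hkn : k < n
      · rw [hgstep n k hkn]
        exact ih k hkn j
      · have hke : k = n := by omega
        subst hke
        rfl
  refine ⟨x, fun F hF => ⟨?_, ?_⟩⟩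
  · intro j
    set n₀ := F.max' hF + 1 with hn₀
    have hFb : ∀ k ∈ F, k < n₀ := fun k hk => by
      have := F.le_max' k hk; omega
    obtain ⟨s, hsA, hsum, _⟩ := (g n₀).2.2.2.1 j F hF hFb
    refine ⟨s, hsA, ?_⟩
    rw [← hsum]
    exact Finset.sum_congr rfl (fun k hk => by rw [hstab n₀ k (hFb k hk) j])
  · intro i
    set n₀ := F.max' hF + 1 with hn₀
    have hFb : ∀ k ∈ F, k < n₀ := fun k hk => by
      have := F.le_max' k hk; omega
    obtain ⟨s, hs, hsum⟩ := (g n₀).2.2.2.2 i F hF hFb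
    refine ⟨s, hDpsub _ (star_subset hs), ?_⟩
    rw [← hsum]
    refine Finset.sum_congr rfl (fun k hk => ?_)
    refine Finset.sum_congr rfl (fun j _ => ?_)
    rw [hstab n₀ k (hFb k hk) j]

end DHSP


/- Repeated addition by `c ∈ ω` and sums over nonempty finite index sets are computed in
`WithZero S` (the monoid obtained by adjoining an additive identity to `S`); membership in
`(↑) '' C` expresses that the `S`-value lies in `C`. -/

/-- `M` satisfies the first entries condition. -/
def FirstEntriesCond (u v : ℕ) (M : Fin u → Fin v → ℕ) : Prop :=
  (∀ i, ∃ j, M i j ≠ 0) ∧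
  (∀ i i' : Fin u, ∀ j : Fin v,
    (M i j ≠ 0 ∧ ∀ j' < j, M i j' = 0) →
    (M i' j ≠ 0 ∧ ∀ j' < j, M i' j' = 0) → M i j = M i' j)

/-- `c` is a first entry of `M` (i.e. `c ∈ P(M)`). -/
def IsFirstEntry (u v : ℕ) (M : Fin u → Fin v → ℕ) (c : ℕ) : Prop :=
  ∃ i j, M i j = c ∧ M i j ≠ 0 ∧ ∀ j' < j, M i j' = 0

/-- De–Hindman–Strauss first entries theorem, Phulara style: `T = ⋂_{A∈𝒜} cl A` is a
compact subsemigroup of `βS_d`, and the images `M x⃗_F` land in `(C_{min F})^u`. -/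
theorem firstEntries_matrix_DeHindmanStrauss_phulara
    {S : Type*} [AddCommSemigroup S]
    (𝒜 : Set (Set S))
    (h1 : 𝒜.Nonempty ∧ ∅ ∉ 𝒜)
    (h2 : ∀ A ∈ 𝒜, ∀ B ∈ 𝒜, A ∩ B ∈ 𝒜)
    (h3 : ∀ A ∈ 𝒜, ∀ a ∈ A, ∃ B ∈ 𝒜, ∀ b ∈ B, a + b ∈ A)
    -- (4')
    (h4' : ∀ A ∈ 𝒜, ∃ B ∈ 𝒜, ∀ b ∈ B, ∀ b' ∈ B, b + b' ∈ A)
    (u v : ℕ) (M : Fin u → Fin v → ℕ) (hM : FirstEntriesCond u v M)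
    -- p is an idempotent in K(T) ∩ ⋂_{A∈𝒜} ⋂_{c∈P(M)} cl(cA)
    (p : Ultrafilter S) (hpT : ∀ A ∈ 𝒜, A ∈ p)
    (hpK : ∀ q : Ultrafilter S, (∀ A ∈ 𝒜, A ∈ q) →
      ∃ r : Ultrafilter S, (∀ A ∈ 𝒜, A ∈ r) ∧ r + q + p = p)
    (hpidem : p = p + p)
    (hpc : ∀ A ∈ 𝒜, ∀ c : ℕ, IsFirstEntry u v M c →
      {x : S | ∃ a ∈ A, (x : WithZero S) = c • (a : WithZero S)} ∈ p)
    (C : ℕ → Set S) (hC : ∀ n, C n ∈ p) :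
    -- T is a compact subsemigroup of βS_d
    IsCompact {q : Ultrafilter S | ∀ A ∈ 𝒜, A ∈ q} ∧
    (∀ q ∈ {q : Ultrafilter S | ∀ A ∈ 𝒜, A ∈ q},
      ∀ q' ∈ {q : Ultrafilter S | ∀ A ∈ 𝒜, A ∈ q},
        q + q' ∈ {q : Ultrafilter S | ∀ A ∈ 𝒜, A ∈ q}) ∧
    -- the main conclusion
    (∀ A ∈ 𝒜, ∃ x : Fin v → ℕ → S,
      ∀ F : Finset ℕ, ∀ hF : F.Nonempty,
        (∀ i : Fin v, (∑ n ∈ F, (x i n : WithZero S))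
          ∈ (fun s : S => (s : WithZero S)) '' A) ∧
        (∀ i : Fin u, (∑ j : Fin v, (M i j) • ∑ n ∈ F, (x j n : WithZero S))
          ∈ (fun s : S => (s : WithZero S)) '' C (F.min' hF))) := by
  refine ⟨?_, ?_, ?_⟩
  · -- compactness of T
    have hTclosed : IsClosed {q : Ultrafilter S | ∀ A ∈ 𝒜, A ∈ q} := by
      have heq : {q : Ultrafilter S | ∀ A ∈ 𝒜, A ∈ q}
          = ⋂ A ∈ 𝒜, {q : Ultrafilter S | A ∈ q} := by
        ext q; simp [Set.mem_iInter]
      rw [heq]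
      exact isClosed_biInter (fun A _ => ultrafilter_isClosed_basic A)
    exact hTclosed.isCompact
  · -- T is a subsemigroup
    intro q hq q' hq' A hA
    rw [DHSP.mem_add_iff]
    refine Filter.mem_of_superset (hq A hA) (fun a ha => ?_)
    obtain ⟨B, hB, hab⟩ := h3 A hA a ha
    exact Filter.mem_of_superset (hq' B hB) (fun b hb => hab b hb)
  · -- the main conclusion
    intro A hA
    obtain ⟨x, hx⟩ := DHSP.main_construction (p := p) h1 h2 h3 h4' hpK hpidem
      (IsFirstEntry u v M) (fun A' hA' c hc => hpc A' hA' c hc)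
      v (Fin u) inferInstance M hM.1 hM.2
      (fun i j hij => ⟨i, j, rfl, hij⟩) C hC hA
    refine ⟨x, fun F hF => ?_⟩
    obtain ⟨hcols, hrows⟩ := hx F hF
    constructor
    · intro i
      obtain ⟨s, hs, hsum⟩ := hcols i
      exact ⟨s, hs, hsum.symm⟩
    · intro i
      obtain ⟨s, hs, hsum⟩ := hrows i
      refine ⟨s, hs, ?_⟩
      show ((s : S) : WithZero S) = _
      rw [← hsum]
      calc ∑ n ∈ F, ∑ j, M i j • ((x j n : WithZero S))
          = ∑ j, ∑ n ∈ F, M i j • ((x j n : WithZero S)) := Finset.sum_comm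
        _ = ∑ j, M i j • ∑ n ∈ F, ((x j n : WithZero S)) := by
            refine Finset.sum_congr rfl (fun j _ => ?_)
            rw [Finset.smul_sum]
end

section
/- Let (S,·) be a semigroup, let A be a central subset of S, and for each ℓ ∈ ℕ let ⟨y_{ℓ,n}⟩_{n=1}^∞ be a sequence in S. Then there exist sequences ⟨m(n)⟩_{n=1}^∞, ⟨⟨a_n(i)⟩_{i=1}^{m(n)+1}⟩_{n=1}^∞ and ⟨⟨H_n(i)⟩_{i=1}^{m(n)}⟩_{n=1}^∞ such that: (1) m(n) ∈ ℕ for each n; (2) a_n(i) ∈ S for each n ∈ ℕ and each i ∈ {1,…,m(n)+1}; (3) H_n(i) ∈ 𝒫_f(ℕ) for each n ∈ ℕ and each i ∈ {1,…,m(n)}; (4) for each n ∈ ℕ and each i ∈ {1,…,m(n)−1}, max H_n(i) < min H_n(i+1); (5) for each n ∈ ℕ, max H_n(m(n)) < min H_{n+1}(1); and (6) for each F ∈ 𝒫_f(ℕ) and each f ∈ Φ = {f : ℕ → ℕ : f(n) ≤ n for all n ∈ ℕ}, one has Π_{n∈F} ( (Π_{i=1}^{m(n)} a_n(i) · Π_{t∈H_n(i)}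 y_{f(n),t}) · a_n(m(n)+1) ) ∈ A, where the products over F and over each H_n(i) are taken in increasing order of the indices. -/
/- The multiplication on `Ultrafilter S` (Stone–Čech extension of `·`):
`A ∈ p · q ↔ {x | {y | x·y ∈ A} ∈ q} ∈ p`. -/
attribute [local instance] Ultrafilter.mul Ultrafilter.semigroup

/- Products of elements of the (possibly noncommutative) semigroup `S`, taken in increasing
order of the indices, are computed in `WithOne S` (the monoid obtained by adjoining an
identity to `S`); a product over a nonempty index set of elements coming from `S` is the
image in `WithOne S` of the corresponding product in `S`, so membership in `(↑) '' A`
expresses that the `S`-valued product lies in `A`. -/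

/-- Ordered product over a finite set of indices, in increasing order. -/
noncomputable def sortedProd {S : Type*} [Semigroup S]
    (g : ℕ → WithOne S) (F : Finset ℕ) : WithOne S :=
  ((F.sort (· ≤ ·)).map g).prod

/-- `A ⊆ S` is central: it belongs to some idempotent ultrafilter in the smallest
two-sided ideal `K(βS)`. -/
def IsCentral {S : Type*} [Semigroup S] (A : Set S) : Prop :=
  ∃ p : Ultrafilter S, p = p * p ∧ (∀ q : Ultrafilter S, ∃ r : Ultrafilter S, r * q * p = p)
    ∧ A ∈ p

set_option linter.unusedSectionVars false

namespace CST

open Finset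

variable {S : Type*} [Semigroup S]

lemma sort_union {F G : Finset ℕ} (h : ∀ s ∈ F, ∀ t ∈ G, s < t) :
    (F ∪ G).sort (· ≤ ·) = F.sort (· ≤ ·) ++ G.sort (· ≤ ·) := by
  have hd : Disjoint F G := by
    rw [Finset.disjoint_left]
    exact fun {a} ha hb => absurd (h a ha a hb) (lt_irrefl a)
  refine (fun hp hs => List.Perm.eq_of_pairwise' (r := fun a b : ℕ => a ≤ b) (Finset.pairwise_sort _ _) hs hp) ?_ ?_
  · have hval : (F ∪ G).val = F.val + G.val := by
      rw [← Finset.disjUnion_eq_union F G hd]; rfl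
    rw [← Multiset.coe_eq_coe, Finset.sort_eq, hval, ← Multiset.coe_add,
      Finset.sort_eq, Finset.sort_eq]
  · rw [List.pairwise_append]
    exact ⟨Finset.pairwise_sort _ _, Finset.pairwise_sort _ _, fun a ha b hb =>
      le_of_lt (h a ((Finset.mem_sort _).1 ha) b ((Finset.mem_sort _).1 hb))⟩

lemma sort_image_add {F : Finset ℕ} (c : ℕ) :
    (F.image (· + c)).sort (· ≤ ·) = (F.sort (· ≤ ·)).map (· + c) := by
  refine (fun hp hs => List.Perm.eq_of_pairwise' (r := fun a b : ℕ => a ≤ b) (Finset.pairwise_sort _ _) hs hp) ?_ ?_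
  · rw [← Multiset.coe_eq_coe]
    have h1 : (((F.image (· + c)).sort (· ≤ ·) : List ℕ) : Multiset ℕ) = (F.image (· + c)).val :=
      Finset.sort_eq _ _
    have hinj : Set.InjOn (· + c) F := fun a _ b _ hab => by simpa using hab
    rw [h1, Finset.image_val_of_injOn hinj, ← Finset.sort_eq F (· ≤ ·), Multiset.map_coe]
  · exact List.Pairwise.map _ (fun a b hab => Nat.add_le_add_right hab c)
      (Finset.pairwise_sort _ _)

lemma sortedProd_congr {g₁ g₂ : ℕ → WithOne S} {F : Finset ℕ} (h : ∀ n ∈ F, g₁ n = g₂ n) :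
    sortedProd g₁ F = sortedProd g₂ F := by
  unfold sortedProd
  congr 1
  exact List.map_congr_left fun a ha => h a ((Finset.mem_sort _).1 ha)

lemma sortedProd_union {g : ℕ → WithOne S} {F G : Finset ℕ} (h : ∀ s ∈ F, ∀ t ∈ G, s < t) :
    sortedProd g (F ∪ G) = sortedProd g F * sortedProd g G := by
  unfold sortedProd; rw [sort_union h, List.map_append, List.prod_append]

@[simp] lemma sortedProd_singleton (g : ℕ → WithOne S) (a : ℕ) : sortedProd g {a} = g a := by
  unfold sortedProd; rw [Finset.sort_singleton]; simp

lemma sortedProd_insert_min {g : ℕ → WithOne S} {a : ℕ} {F : Finset ℕ} (h : ∀ t ∈ F, a < t) :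
    sortedProd g (insert a F) = g a * sortedProd g F := by
  rw [Finset.insert_eq, sortedProd_union (by simpa using h), sortedProd_singleton]

lemma sortedProd_insert_max {g : ℕ → WithOne S} {a : ℕ} {F : Finset ℕ} (h : ∀ t ∈ F, t < a) :
    sortedProd g (insert a F) = sortedProd g F * g a := by
  rw [Finset.insert_eq, Finset.union_comm,
    sortedProd_union (fun s hs t ht => by rw [Finset.mem_singleton] at ht; exact ht ▸ h s hs),
    sortedProd_singleton]

lemma sortedProd_image_add {g : ℕ → WithOne S} (F : Finset ℕ) (c : ℕ) :
    sortedProd g (F.image (· + c)) = sortedProd (fun n => g (n + c)) F := by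
  unfold sortedProd; rw [sort_image_add, List.map_map]; rfl

lemma list_prod_coe : ∀ (l : List ℕ) (g : ℕ → WithOne S), l ≠ [] →
    (∀ n ∈ l, ∃ s : S, g n = ↑s) → ∃ s : S, (l.map g).prod = ↑s
  | [], _, h, _ => absurd rfl h
  | [a], g, _, hg => by
      obtain ⟨s, hs⟩ := hg a (by simp)
      exact ⟨s, by simp [hs]⟩
  | a :: b :: t, g, _, hg => by
      obtain ⟨s, hs⟩ := list_prod_coe (b :: t) g (by simp)
        (fun n hn => hg n (List.mem_cons_of_mem a hn))
      obtain ⟨sa, hsa⟩ := hg a List.mem_cons_self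
      refine ⟨sa * s, ?_⟩
      rw [List.map_cons, List.prod_cons, hs, hsa, ← WithOne.coe_mul]

lemma sortedProd_exists_coe {g : ℕ → WithOne S} {F : Finset ℕ} (hF : F.Nonempty)
    (hg : ∀ n ∈ F, ∃ s : S, g n = ↑s) : ∃ s : S, sortedProd g F = ↑s := by
  apply list_prod_coe
  · obtain ⟨a, ha⟩ := hF
    intro h0
    have := (Finset.mem_sort (α := ℕ) (· ≤ ·)).2 ha
    rw [h0] at this
    simp at this
  · exact fun n hn => hg n ((Finset.mem_sort _).1 hn)

end CST

namespace CST

open Finset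

variable {S : Type*} [Semigroup S]

/-- The block product `a 1 * ∏_{t ∈ H 1} z t * a 2 * ⋯ * a m * ∏_{t ∈ H m} z t * a (m+1)`. -/
noncomputable def bp (z : ℕ → S) (m : ℕ) (a : ℕ → S) (H : ℕ → Finset ℕ) : WithOne S :=
  sortedProd (fun i => (a i : WithOne S) *
      sortedProd (fun t => (z t : WithOne S)) (H i)) (Finset.Icc 1 m)
    * (a (m + 1) : WithOne S)

lemma bp_exists_coe (z : ℕ → S) {m : ℕ} (a : ℕ → S) {H : ℕ → Finset ℕ}
    (hm : 1 ≤ m) (hH : ∀ i ∈ Finset.Icc 1 m, (H i).Nonempty) :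
    ∃ s : S, bp z m a H = ↑s := by
  unfold bp
  have h1 : ∃ s : S, sortedProd (fun i => (a i : WithOne S) *
      sortedProd (fun t => (z t : WithOne S)) (H i)) (Finset.Icc 1 m) = ↑s := by
    refine sortedProd_exists_coe ⟨1, by simp [Finset.mem_Icc]; omega⟩ fun i hi => ?_
    obtain ⟨w, hw⟩ := sortedProd_exists_coe (hH i hi)
      (fun t _ => ⟨z t, rfl⟩)
    exact ⟨a i * w, by rw [hw, WithOne.coe_mul]⟩
  obtain ⟨s, hs⟩ := h1
  exact ⟨s * a (m + 1), by rw [hs, WithOne.coe_mul]⟩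

lemma bp_congr (z : ℕ → S) (m : ℕ) {a a' : ℕ → S} {H H' : ℕ → Finset ℕ}
    (ha : ∀ i, 1 ≤ i → i ≤ m + 1 → a i = a' i)
    (hH : ∀ i, 1 ≤ i → i ≤ m → H i = H' i) :
    bp z m a H = bp z m a' H' := by
  unfold bp
  rw [ha (m+1) (by omega) (by omega)]
  congr 1
  refine sortedProd_congr fun i hi => ?_
  rw [Finset.mem_Icc] at hi
  rw [ha i hi.1 (by omega), hH i hi.1 hi.2]

lemma bp_mul_coe (z : ℕ → S) (m : ℕ) {a a' : ℕ → S} (H : ℕ → Finset ℕ) (w : S)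
    (h1 : ∀ i, 1 ≤ i → i ≤ m → a' i = a i) (h2 : a' (m + 1) = a (m + 1) * w) :
    bp z m a H * (w : WithOne S) = bp z m a' H := by
  unfold bp
  rw [mul_assoc, ← WithOne.coe_mul, ← h2]
  congr 1
  refine sortedProd_congr fun i hi => ?_
  rw [Finset.mem_Icc] at hi
  rw [h1 i hi.1 hi.2]

lemma coe_mul_bp (z : ℕ → S) {m : ℕ} {a a' : ℕ → S} (H : ℕ → Finset ℕ) (w : S) (hm : 1 ≤ m)
    (h1 : a' 1 = w * a 1) (h2 : ∀ i, 2 ≤ i → a' i = a i) :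
    (w : WithOne S) * bp z m a H = bp z m a' H := by
  have hins : Finset.Icc 1 m = insert 1 (Finset.Icc 2 m) := by
    ext i; simp only [Finset.mem_Icc, Finset.mem_insert]; omega
  have hlt : ∀ t ∈ Finset.Icc 2 m, 1 < t := fun t ht => by
    rw [Finset.mem_Icc] at ht; omega
  have hcongr : sortedProd (fun i => (a' i : WithOne S) *
        sortedProd (fun t => (z t : WithOne S)) (H i)) (Finset.Icc 2 m)
      = sortedProd (fun i => (a i : WithOne S) *
        sortedProd (fun t => (z t : WithOne S)) (H i)) (Finset.Icc 2 m) := by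
    refine sortedProd_congr fun i hi => ?_
    rw [Finset.mem_Icc] at hi
    rw [h2 i hi.1]
  unfold bp
  rw [hins, sortedProd_insert_min hlt, sortedProd_insert_min hlt, hcongr,
    h1, h2 (m+1) (by omega), WithOne.coe_mul]
  simp only [mul_assoc]

lemma bp_concat (z : ℕ → S) {m₁ m₂ : ℕ} {a₁ a₂ A : ℕ → S} {H₁ H₂ HH : ℕ → Finset ℕ}
    (hm₁ : 1 ≤ m₁) (hm₂ : 1 ≤ m₂)
    (hA1 : ∀ i, 1 ≤ i → i ≤ m₁ → A i = a₁ i)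
    (hA2 : A (m₁ + 1) = a₁ (m₁ + 1) * a₂ 1)
    (hA3 : ∀ i, 2 ≤ i → A (m₁ + i) = a₂ i)
    (hH1 : ∀ i, 1 ≤ i → i ≤ m₁ → HH i = H₁ i)
    (hH2 : ∀ i, 1 ≤ i → HH (m₁ + i) = H₂ i) :
    bp z m₁ a₁ H₁ * bp z m₂ a₂ H₂ = bp z (m₁ + m₂) A HH := by
  set g : ℕ → WithOne S := fun i => (A i : WithOne S) *
    sortedProd (fun t => (z t : WithOne S)) (HH i) with hg
  set g₂ : ℕ → WithOne S := fun i => (a₂ i : WithOne S) *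
    sortedProd (fun t => (z t : WithOne S)) (H₂ i) with hg₂
  have hsplit : Finset.Icc 1 (m₁ + m₂) = Finset.Icc 1 m₁ ∪ Finset.Icc (m₁ + 1) (m₁ + m₂) := by
    ext i; simp only [Finset.mem_Icc, Finset.mem_union]; omega
  have himg : Finset.Icc (m₁ + 1) (m₁ + m₂) = (Finset.Icc 1 m₂).image (· + m₁) := by
    ext i
    simp only [Finset.mem_Icc, Finset.mem_image]
    constructor
    · intro hi; exact ⟨i - m₁, by omega, by omega⟩
    · rintro ⟨j, hj, rfl⟩; omega
  have hlt : ∀ s ∈ Finset.Icc 1 m₁, ∀ t ∈ Finset.Icc (m₁ + 1) (m₁ + m₂), s < t := by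
    intro s hs t ht; rw [Finset.mem_Icc] at hs; rw [Finset.mem_Icc] at ht; omega
  have step1 : sortedProd g (Finset.Icc 1 (m₁ + m₂))
      = sortedProd g (Finset.Icc 1 m₁) * sortedProd g (Finset.Icc (m₁ + 1) (m₁ + m₂)) := by
    rw [hsplit, sortedProd_union hlt]
  have step2 : sortedProd g (Finset.Icc 1 m₁)
      = sortedProd (fun i => (a₁ i : WithOne S) *
          sortedProd (fun t => (z t : WithOne S)) (H₁ i)) (Finset.Icc 1 m₁) := by
    refine sortedProd_congr fun i hi => ?_
    rw [Finset.mem_Icc] at hi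
    show (A i : WithOne S) * sortedProd (fun t => (z t : WithOne S)) (HH i)
      = (a₁ i : WithOne S) * sortedProd (fun t => (z t : WithOne S)) (H₁ i)
    rw [hA1 i hi.1 hi.2, hH1 i hi.1 hi.2]
  have step3 : sortedProd g (Finset.Icc (m₁ + 1) (m₁ + m₂))
      = (a₁ (m₁ + 1) : WithOne S) * sortedProd g₂ (Finset.Icc 1 m₂) := by
    rw [himg, sortedProd_image_add]
    have hins : Finset.Icc 1 m₂ = insert 1 (Finset.Icc 2 m₂) := by
      ext i; simp only [Finset.mem_Icc, Finset.mem_insert]; omega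
    have hlt2 : ∀ t ∈ Finset.Icc 2 m₂, 1 < t := fun t ht => by
      rw [Finset.mem_Icc] at ht; omega
    rw [hins, sortedProd_insert_min hlt2, sortedProd_insert_min hlt2]
    have e1 : g (1 + m₁) = (↑(a₁ (m₁ + 1)) * ↑(a₂ 1) : WithOne S) *
        sortedProd (fun t => (z t : WithOne S)) (H₂ 1) := by
      have e : 1 + m₁ = m₁ + 1 := by omega
      rw [e]
      show (A (m₁ + 1) : WithOne S) * sortedProd (fun t => (z t : WithOne S)) (HH (m₁ + 1))
        = (↑(a₁ (m₁ + 1)) * ↑(a₂ 1) : WithOne S) * sortedProd (fun t => (z t : WithOne S)) (H₂ 1)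
      rw [hA2, hH2 1 (by omega), WithOne.coe_mul]
    have e2 : sortedProd (fun n => g (n + m₁)) (Finset.Icc 2 m₂)
        = sortedProd g₂ (Finset.Icc 2 m₂) := by
      refine sortedProd_congr fun i hi => ?_
      rw [Finset.mem_Icc] at hi
      have e : i + m₁ = m₁ + i := by omega
      rw [e]
      show (A (m₁ + i) : WithOne S) * sortedProd (fun t => (z t : WithOne S)) (HH (m₁ + i))
        = (a₂ i : WithOne S) * sortedProd (fun t => (z t : WithOne S)) (H₂ i)
      rw [hA3 i hi.1, hH2 i (by omega)]
    rw [e1, e2, hg₂]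
    simp only [mul_assoc]
  have eA : A (m₁ + m₂ + 1) = a₂ (m₂ + 1) := by
    have e : m₁ + m₂ + 1 = m₁ + (m₂ + 1) := by omega
    rw [e, hA3 (m₂ + 1) (by omega)]
  show (sortedProd _ (Finset.Icc 1 m₁) * (a₁ (m₁ + 1) : WithOne S)) *
      (sortedProd g₂ (Finset.Icc 1 m₂) * (a₂ (m₂ + 1) : WithOne S))
    = sortedProd g (Finset.Icc 1 (m₁ + m₂)) * (A (m₁ + m₂ + 1) : WithOne S)
  rw [eA, step1, step2, step3]
  simp only [mul_assoc]

end CST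

namespace CST

open Finset

variable {S : Type*} [Semigroup S]

lemma mem_mul {p q : Ultrafilter S} {B : Set S} :
    B ∈ p * q ↔ {x | {z | x * z ∈ B} ∈ q} ∈ p := by
  have h := Ultrafilter.eventually_mul p q (· ∈ B)
  simpa only [Filter.eventually_iff, Ultrafilter.mem_coe, Set.setOf_mem_eq] using h

lemma pure_mul_pure (x z : S) : (pure x : Ultrafilter S) * pure z = pure (x * z) :=
  Ultrafilter.ext fun s => by
    simp only [mem_mul, Ultrafilter.mem_pure, Set.mem_setOf_eq]

lemma continuous_pure_mul (x : S) :
    Continuous fun q : Ultrafilter S => (pure x : Ultrafilter S) * q := by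
  refine ultrafilterBasis_is_basis.continuous_iff.2 ?_
  rintro s ⟨B, rfl⟩
  have h : (fun q : Ultrafilter S => (pure x : Ultrafilter S) * q) ⁻¹' {u | B ∈ u}
      = {u : Ultrafilter S | {z | x * z ∈ B} ∈ u} := by
    ext q
    simp only [Set.mem_preimage, Set.mem_setOf_eq, mem_mul, Ultrafilter.mem_pure]
  rw [h]
  exact ultrafilter_isOpen_basic _

variable {K : ℕ}

/-- Tuple of principal ultrafilters. -/
def pureT (x : Fin K → S) : Fin K → Ultrafilter S := fun j => pure (x j)

lemma contR (r : Fin K → Ultrafilter S) :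
    Continuous fun q : Fin K → Ultrafilter S => q * r :=
  continuous_pi fun j => (Ultrafilter.continuous_mul_left (r j)).comp (continuous_apply j)

lemma contLpure (x : Fin K → S) :
    Continuous fun q : Fin K → Ultrafilter S => pureT x * q :=
  continuous_pi fun j => (continuous_pure_mul (x j)).comp (continuous_apply j)

lemma pureT_mul (x z : Fin K → S) : pureT x * pureT z = pureT (fun j => x j * z j) :=
  funext fun j => pure_mul_pure (x j) (z j)

lemma closure_mul_right {X Y : Set (Fin K → Ultrafilter S)} {q r : Fin K → Ultrafilter S}
    (hq : q ∈ closure X) (h : ∀ x ∈ X, x * r ∈ closure Y) : q * r ∈ closure Y := by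
  have h1 : q * r ∈ closure ((fun z => z * r) '' X) :=
    image_closure_subset_closure_image (contR r) ⟨q, hq, rfl⟩
  exact closure_minimal (by rintro _ ⟨x, hx, rfl⟩; exact h x hx) isClosed_closure h1

lemma pureT_mul_closure {X Y : Set (Fin K → Ultrafilter S)} {r : Fin K → Ultrafilter S}
    (x : Fin K → S) (hr : r ∈ closure X)
    (h : ∀ z ∈ X, pureT x * z ∈ closure Y) : pureT x * r ∈ closure Y := by
  have h1 : pureT x * r ∈ closure ((fun z => pureT x * z) '' X) :=
    image_closure_subset_closure_image (contLpure x) ⟨r, hr, rfl⟩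
  exact closure_minimal (by rintro _ ⟨z, hz, rfl⟩; exact h z hz) isClosed_closure h1

lemma mem_closure_pi {X : Set (Fin K → Ultrafilter S)} {q : Fin K → Ultrafilter S}
    (h : ∀ C : Fin K → Set S, (∀ j, C j ∈ q j) → ∃ r ∈ X, ∀ j, C j ∈ r j) :
    q ∈ closure X := by
  rw [mem_closure_iff]
  intro U hU hqU
  obtain ⟨J, u, hu, hsub⟩ := isOpen_pi_iff.1 hU q hqU
  have key : ∀ j : Fin K, ∃ C : Set S, C ∈ q j ∧
      (j ∈ J → {v : Ultrafilter S | C ∈ v} ⊆ u j) := by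
    intro j
    by_cases hj : j ∈ J
    · obtain ⟨v, hvB, hqv, hvu⟩ :=
        ultrafilterBasis_is_basis.exists_subset_of_mem_open (hu j hj).2 (hu j hj).1
      obtain ⟨B, rfl⟩ := hvB
      exact ⟨B, hqv, fun _ => hvu⟩
    · exact ⟨Set.univ, Filter.univ_mem, fun hj' => absurd hj' hj⟩
  choose C hCq hCu using key
  obtain ⟨r, hrX, hr⟩ := h C hCq
  exact ⟨r, hsub fun j hj => hCu j hj (hr j), hrX⟩

lemma closure_pi_mem {X : Set (Fin K → Ultrafilter S)} {q : Fin K → Ultrafilter S}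
    (hq : q ∈ closure X) (C : Fin K → Set S) (hC : ∀ j, C j ∈ q j) :
    ∃ r ∈ X, ∀ j, C j ∈ r j := by
  have hopen : IsOpen {r : Fin K → Ultrafilter S | ∀ j, C j ∈ r j} := by
    have h : {r : Fin K → Ultrafilter S | ∀ j, C j ∈ r j}
        = ⋂ j, (fun r : Fin K → Ultrafilter S => r j) ⁻¹' {u | C j ∈ u} := by
      ext r; simp only [Set.mem_setOf_eq, Set.mem_iInter, Set.mem_preimage]
    rw [h]
    exact isOpen_iInter_of_finite fun j =>
      (ultrafilter_isOpen_basic (C j)).preimage (continuous_apply j)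
  obtain ⟨r, hr1, hr2⟩ := mem_closure_iff.1 hq _ hopen hC
  exact ⟨r, hr2, hr1⟩

end CST

namespace CST

open Finset

variable {S : Type*} [Semigroup S]

/-- Shape conditions on the blocks. -/
def Shape (N m : ℕ) (H : ℕ → Finset ℕ) : Prop :=
  1 ≤ m ∧ (∀ i ∈ Finset.Icc 1 m, (H i).Nonempty) ∧
  (∀ i, 1 ≤ i → i + 1 ≤ m → ∀ s ∈ H i, ∀ t ∈ H (i + 1), s < t) ∧
  (∀ i ∈ Finset.Icc 1 m, ∀ t ∈ H i, N < t)

/-- Tuples of simultaneous block products, blocks beyond `N`. -/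
def ISet (y : ℕ → ℕ → S) (k N : ℕ) : Set (Fin (k + 1) → S) :=
  {x | ∃ m a H, Shape N m H ∧ ∀ j : Fin (k + 1), bp (y j.1) m a H = ↑(x j)}

lemma ISet_antitone (y : ℕ → ℕ → S) (k : ℕ) {N M : ℕ} (h : N ≤ M) :
    ISet y k M ⊆ ISet y k N := by
  rintro x ⟨m, a, H, ⟨h1, h2, h3, h4⟩, h5⟩
  exact ⟨m, a, H, ⟨h1, h2, h3, fun i hi t ht => lt_of_le_of_lt h (h4 i hi t ht)⟩, h5⟩

lemma ISet_nonempty (y : ℕ → ℕ → S) (k N : ℕ) (c₀ : S) :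
    (fun j : Fin (k + 1) => c₀ * y j.1 (N + 1) * c₀) ∈ ISet y k N := by
  refine ⟨1, fun _ => c₀, fun _ => {N + 1}, ⟨le_refl 1, fun i _ => ⟨N + 1, mem_singleton_self _⟩,
    fun i hi hi2 => by omega, fun i _ t ht => by rw [Finset.mem_singleton] at ht; omega⟩, ?_⟩
  intro j
  unfold bp
  have h1 : Finset.Icc 1 1 = {1} := rfl
  rw [h1, sortedProd_singleton, sortedProd_singleton, ← WithOne.coe_mul, ← WithOne.coe_mul]

lemma diag_mul_ISet (y : ℕ → ℕ → S) (k N : ℕ) (w : S) {x : Fin (k + 1) → S}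
    (hx : x ∈ ISet y k N) : (fun j => w * x j) ∈ ISet y k N := by
  obtain ⟨m, a, H, hsh, hbp⟩ := hx
  classical
  set a2 : ℕ → S := fun i => if i = 1 then w * a 1 else a i with ha2
  have h1 : a2 1 = w * a 1 := by
    show (if 1 = 1 then w * a 1 else a 1) = w * a 1
    rw [if_pos rfl]
  have h2 : ∀ i, 2 ≤ i → a2 i = a i := fun i hi => by
    show (if i = 1 then w * a 1 else a i) = a i
    rw [if_neg (by omega)]
  refine ⟨m, a2, H, hsh, fun j => ?_⟩
  show bp (y j.1) m a2 H = ↑(w * x j)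
  rw [← coe_mul_bp (y j.1) H w hsh.1 h1 h2, hbp j, WithOne.coe_mul]

lemma ISet_mul_diag (y : ℕ → ℕ → S) (k N : ℕ) (w : S) {x : Fin (k + 1) → S}
    (hx : x ∈ ISet y k N) : (fun j => x j * w) ∈ ISet y k N := by
  obtain ⟨m, a, H, hsh, hbp⟩ := hx
  classical
  set a2 : ℕ → S := fun i => if i = m + 1 then a (m + 1) * w else a i with ha2
  have h1 : ∀ i, 1 ≤ i → i ≤ m → a2 i = a i := fun i hi1 hi2 => by
    show (if i = m + 1 then a (m + 1) * w else a i) = a i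
    rw [if_neg (by omega)]
  have h2 : a2 (m + 1) = a (m + 1) * w := by
    show (if m + 1 = m + 1 then a (m + 1) * w else a (m + 1)) = a (m + 1) * w
    rw [if_pos rfl]
  refine ⟨m, a2, H, hsh, fun j => ?_⟩
  show bp (y j.1) m a2 H = ↑(x j * w)
  rw [← bp_mul_coe (y j.1) m H w h1 h2, hbp j, WithOne.coe_mul]

lemma ISet_mul_ISet (y : ℕ → ℕ → S) (k N : ℕ) {x : Fin (k + 1) → S}
    (hx : x ∈ ISet y k N) :
    ∃ M, ∀ z ∈ ISet y k M, (fun j => x j * z j) ∈ ISet y k N := by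
  classical
  obtain ⟨m, a, H, hsh, hbp⟩ := hx
  obtain ⟨hm, hne, hord, hbig⟩ := hsh
  set Msup := max N ((Finset.Icc 1 m).sup fun i => (H i).sup id) with hMsup
  have helem : ∀ i ∈ Finset.Icc 1 m, ∀ s ∈ H i, s ≤ Msup := by
    intro i hi s hs
    calc s = id s := rfl
    _ ≤ (H i).sup id := Finset.le_sup hs
    _ ≤ (Finset.Icc 1 m).sup fun i => (H i).sup id := Finset.le_sup (f := fun i => (H i).sup id) hi
    _ ≤ Msup := le_max_right _ _
  refine ⟨Msup, ?_⟩
  rintro z ⟨m', a', H', ⟨hm', hne', hord', hbig'⟩, hbp'⟩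
  set A : ℕ → S := fun i => if i ≤ m then a i
    else if i = m + 1 then a (m + 1) * a' 1 else a' (i - m) with hA
  set HH : ℕ → Finset ℕ := fun i => if i ≤ m then H i else H' (i - m) with hHH
  have hHle : ∀ i, i ≤ m → HH i = H i := by
    intro i h; simp only [hHH]; rw [if_pos h]
  have hHgt : ∀ i, m < i → HH i = H' (i - m) := by
    intro i h; simp only [hHH]; rw [if_neg (by omega)]
  refine ⟨m + m', A, HH, ⟨by omega, ?_, ?_, ?_⟩, ?_⟩
  · -- nonempty
    intro i hi
    rw [Finset.mem_Icc] at hi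
    by_cases h : i ≤ m
    · rw [hHle i h]; exact hne i (Finset.mem_Icc.2 ⟨hi.1, h⟩)
    · rw [hHgt i (by omega)]; exact hne' (i - m) (Finset.mem_Icc.2 ⟨by omega, by omega⟩)
  · -- consecutive ordering
    intro i hi1 hi2 s hs t ht
    by_cases h1 : i + 1 ≤ m
    · rw [hHle i (by omega)] at hs; rw [hHle (i + 1) h1] at ht
      exact hord i hi1 h1 s hs t ht
    · by_cases h2 : i ≤ m
      · -- i = m
        have him : i = m := by omega
        rw [hHle i h2] at hs
        rw [hHgt (i + 1) (by omega)] at ht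
        have ht1 : t ∈ H' 1 := by
          have : i + 1 - m = 1 := by omega
          rwa [this] at ht
        have hsM : s ≤ Msup := helem i (Finset.mem_Icc.2 ⟨hi1, h2⟩) s hs
        have htM : Msup < t := hbig' 1 (Finset.mem_Icc.2 ⟨le_refl 1, hm'⟩) t ht1
        omega
      · -- i > m
        rw [hHgt i (by omega)] at hs
        rw [hHgt (i + 1) (by omega)] at ht
        have he : i + 1 - m = (i - m) + 1 := by omega
        rw [he] at ht
        exact hord' (i - m) (by omega) (by omega) s hs t ht
  · -- min bound
    intro i hi t ht
    rw [Finset.mem_Icc] at hi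
    by_cases h : i ≤ m
    · rw [hHle i h] at ht; exact hbig i (Finset.mem_Icc.2 ⟨hi.1, h⟩) t ht
    · rw [hHgt i (by omega)] at ht
      have := hbig' (i - m) (Finset.mem_Icc.2 ⟨by omega, by omega⟩) t ht
      have hNM : N ≤ Msup := le_max_left _ _
      omega
  · -- products
    intro j
    have hA1 : ∀ i, 1 ≤ i → i ≤ m → A i = a i := fun i h1 h2 => by
      show (if i ≤ m then a i else if i = m + 1 then a (m + 1) * a' 1 else a' (i - m)) = a i
      rw [if_pos h2]
    have hA2 : A (m + 1) = a (m + 1) * a' 1 := by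
      show (if m + 1 ≤ m then a (m + 1) else if m + 1 = m + 1 then a (m + 1) * a' 1
        else a' (m + 1 - m)) = a (m + 1) * a' 1
      rw [if_neg (by omega), if_pos rfl]
    have hA3 : ∀ i, 2 ≤ i → A (m + i) = a' i := fun i h2 => by
      show (if m + i ≤ m then a (m + i) else if m + i = m + 1 then a (m + 1) * a' 1
        else a' (m + i - m)) = a' i
      rw [if_neg (by omega), if_neg (by omega)]
      congr 1; omega
    have hH1 : ∀ i, 1 ≤ i → i ≤ m → HH i = H i := fun i h1 h2 => hHle i h2
    have hH2 : ∀ i, 1 ≤ i → HH (m + i) = H' i := fun i h1 => by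
      rw [hHgt (m + i) (by omega)]; congr 1; omega
    have hcat := bp_concat (z := y j.1) hm hm' hA1 hA2 hA3 hH1 hH2
    show bp (y j.1) (m + m') A HH = ↑(x j * z j)
    rw [← hcat, hbp j, hbp' j, ← WithOne.coe_mul]

end CST

namespace CST

open Finset

variable {S : Type*} [Semigroup S]

theorem key_lemma (p : Ultrafilter S)
    (hp : p = p * p) (hmin : ∀ q : Ultrafilter S, ∃ r : Ultrafilter S, r * q * p = p)
    (y : ℕ → ℕ → S) (k N : ℕ) {C : Set S} (hC : C ∈ p) :
    ∃ (m : ℕ) (a : ℕ → S) (H : ℕ → Finset ℕ),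
      Shape N m H ∧ (∀ j ≤ k, ∃ s ∈ C, bp (y j) m a H = ↑s) := by
  classical
  obtain ⟨c₀, _⟩ := Ultrafilter.nonempty_of_mem hC
  set J : ℕ → Set (Fin (k + 1) → Ultrafilter S) := fun n => pureT '' ISet y k n with hJ
  set D : ℕ → Set (Fin (k + 1) → Ultrafilter S) := fun n => closure (J n) with hD
  set Ibar : Set (Fin (k + 1) → Ultrafilter S) := ⋂ n, D n with hIbar
  set Diag : Set (Fin (k + 1) → S) := {x | ∃ w, x = fun _ => w} with hDiag
  set Dl : Set (Fin (k + 1) → Ultrafilter S) := closure (pureT '' Diag) with hDl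
  set pbar : Fin (k + 1) → Ultrafilter S := fun _ => p with hpbar
  have hpp : pbar * pbar = pbar := funext fun j => (congrArg id hp).symm
  -- multiplication rules
  have hDlDl : ∀ q ∈ Dl, ∀ r ∈ Dl, q * r ∈ Dl := by
    intro q hq r hr
    refine closure_mul_right hq ?_
    rintro _ ⟨x, hx, rfl⟩
    refine pureT_mul_closure x hr ?_
    rintro _ ⟨z, hz, rfl⟩
    rw [pureT_mul]
    refine subset_closure ⟨_, ?_, rfl⟩
    obtain ⟨w, rfl⟩ := hx
    obtain ⟨v, rfl⟩ := hz
    exact ⟨w * v, rfl⟩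
  have hDlD : ∀ n, ∀ q ∈ Dl, ∀ r ∈ D n, q * r ∈ D n := by
    intro n q hq r hr
    refine closure_mul_right hq ?_
    rintro _ ⟨x, hx, rfl⟩
    refine pureT_mul_closure x hr ?_
    rintro _ ⟨z, hz, rfl⟩
    rw [pureT_mul]
    refine subset_closure ⟨_, ?_, rfl⟩
    obtain ⟨w, rfl⟩ := hx
    exact diag_mul_ISet y k n w hz
  have hDDl : ∀ n, ∀ q ∈ D n, ∀ r ∈ Dl, q * r ∈ D n := by
    intro n q hq r hr
    refine closure_mul_right hq ?_
    rintro _ ⟨x, hx, rfl⟩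
    refine pureT_mul_closure x hr ?_
    rintro _ ⟨z, hz, rfl⟩
    rw [pureT_mul]
    refine subset_closure ⟨_, ?_, rfl⟩
    obtain ⟨w, rfl⟩ := hz
    exact ISet_mul_diag y k n w hx
  have hDI : ∀ n, ∀ q ∈ D n, ∀ r ∈ Ibar, q * r ∈ D n := by
    intro n q hq r hr
    refine closure_mul_right hq ?_
    rintro _ ⟨x, hx, rfl⟩
    obtain ⟨M, hM⟩ := ISet_mul_ISet y k n hx
    have hrM : r ∈ D M := Set.mem_iInter.1 hr M
    refine pureT_mul_closure x hrM ?_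
    rintro _ ⟨z, hz, rfl⟩
    rw [pureT_mul]
    exact subset_closure ⟨_, hM z hz, rfl⟩
  set Ebar : Set (Fin (k + 1) → Ultrafilter S) := Dl ∪ Ibar with hEbar
  have hEI : ∀ q ∈ Ebar, ∀ r ∈ Ibar, q * r ∈ Ibar := by
    intro q hq r hr
    refine Set.mem_iInter.2 fun n => ?_
    rcases hq with hq | hq
    · exact hDlD n q hq r (Set.mem_iInter.1 hr n)
    · exact hDI n q (Set.mem_iInter.1 hq n) r hr
  have hIE : ∀ q ∈ Ibar, ∀ r ∈ Ebar, q * r ∈ Ibar := by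
    intro q hq r hr
    refine Set.mem_iInter.2 fun n => ?_
    rcases hr with hr | hr
    · exact hDDl n q (Set.mem_iInter.1 hq n) r hr
    · exact hDI n q (Set.mem_iInter.1 hq n) r hr
  have hEE : ∀ q ∈ Ebar, ∀ r ∈ Ebar, q * r ∈ Ebar := by
    intro q hq r hr
    rcases hq with hq | hq
    · rcases hr with hr | hr
      · exact Or.inl (hDlDl q hq r hr)
      · exact Or.inr (hEI q (Or.inl hq) r hr)
    · exact Or.inr (hIE q hq r hr)
  -- pbar in Dl
  have hpDl : pbar ∈ Dl := by
    refine mem_closure_pi fun Cs hCs => ?_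
    have hint : (⋂ j, Cs j) ∈ p := Filter.iInter_mem.2 fun j => hCs j
    obtain ⟨w, hw⟩ := Ultrafilter.nonempty_of_mem hint
    refine ⟨pureT (fun _ => w), ⟨_, ⟨w, rfl⟩, rfl⟩, fun j => ?_⟩
    exact Ultrafilter.mem_pure.2 (Set.mem_iInter.1 hw j)
  -- Ibar is nonempty
  have hDne : ∀ n, (D n).Nonempty := fun n =>
    ⟨pureT _, subset_closure ⟨_, ISet_nonempty y k n c₀, rfl⟩⟩
  have hIbarne : Ibar.Nonempty := by
    refine IsCompact.nonempty_iInter_of_sequence_nonempty_isCompact_isClosed D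
      (fun n => closure_mono (Set.image_mono (ISet_antitone y k (by omega)))) hDne
      isClosed_closure.isCompact (fun n => isClosed_closure)
  obtain ⟨tb, htb⟩ := hIbarne
  have hEbarclosed : IsClosed Ebar :=
    IsClosed.union isClosed_closure (isClosed_iInter fun n => isClosed_closure)
  -- the compact subsemigroup L₀
  set L₀ : Set (Fin (k + 1) → Ultrafilter S) :=
    (fun v => v * pbar) '' ((fun v => v * tb) '' Ebar ∪ {tb}) with hL₀
  have hL₀I : L₀ ⊆ Ibar := by
    rintro _ ⟨w, hw, rfl⟩
    rcases hw with ⟨v, hv, rfl⟩ | hw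
    · exact hIE _ (hEI v hv tb htb) pbar (Or.inl hpDl)
    · rw [Set.mem_singleton_iff] at hw
      rw [hw]
      exact hIE tb htb pbar (Or.inl hpDl)
  have hL₀compact : IsCompact L₀ :=
    (((hEbarclosed.isCompact.image (contR tb)).union isCompact_singleton).image (contR pbar))
  have hL₀ne : L₀.Nonempty := ⟨tb * pbar, ⟨tb, Or.inr rfl, rfl⟩⟩
  have hL₀mul : ∀ u₁ ∈ L₀, ∀ u₂ ∈ L₀, u₁ * u₂ ∈ L₀ := by
    intro u₁ hu₁ u₂ hu₂
    have hu₁E : u₁ ∈ Ebar := Or.inr (hL₀I hu₁)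
    obtain ⟨w, hw, rfl⟩ := hu₂
    rcases hw with ⟨v, hv, rfl⟩ | hw
    · refine ⟨(u₁ * v) * tb, Or.inl ⟨u₁ * v, hEE u₁ hu₁E v hv, rfl⟩, ?_⟩
      simp only [mul_assoc]
    · rw [Set.mem_singleton_iff] at hw
      rw [hw]
      exact ⟨u₁ * tb, Or.inl ⟨u₁, hu₁E, rfl⟩, by simp only [mul_assoc]⟩
  obtain ⟨e, heL, hee⟩ := exists_idempotent_in_compact_subsemigroup
    (fun r => contR r) L₀ hL₀ne hL₀compact hL₀mul
  -- e * pbar = e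
  have hep : e * pbar = e := by
    obtain ⟨w, _, rfl⟩ := heL
    rw [mul_assoc, hpp]
  -- minimality
  have hrb : ∃ rbar : Fin (k + 1) → Ultrafilter S, rbar * e * pbar = pbar := by
    have h := fun j : Fin (k + 1) => hmin (e j)
    choose rr hrr using h
    exact ⟨rr, funext fun j => hrr j⟩
  obtain ⟨rbar, hrbar⟩ := hrb
  have hre : rbar * e = pbar := by rw [mul_assoc, hep] at hrbar; exact hrbar
  have hpe : pbar * e = pbar := by
    rw [← hre, mul_assoc, hee]
  have hpIbar : pbar ∈ Ibar := by
    rw [← hpe]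
    exact hEI pbar (Or.inl hpDl) e (hL₀I heL)
  -- extract from D N
  have hpDN : pbar ∈ D N := Set.mem_iInter.1 hpIbar N
  obtain ⟨r, hrJ, hrC⟩ := closure_pi_mem hpDN (fun _ => C) (fun j => hC)
  obtain ⟨x, hxI, rfl⟩ := hrJ
  obtain ⟨m, a, H, hsh, hbp⟩ := hxI
  refine ⟨m, a, H, hsh, fun j hj => ?_⟩
  have hj' : j < k + 1 := by omega
  refine ⟨x ⟨j, hj'⟩, ?_, hbp ⟨j, hj'⟩⟩
  exact Ultrafilter.mem_pure.1 (hrC ⟨j, hj'⟩)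

end CST

namespace CST

open Finset

variable {S : Type*} [Semigroup S]

/-- The invariant carried through the recursion: shape conditions for indices `< n`,
cross-ordering, and all products of blocks with indices `< n` land in `B`. -/
def Inv (y : ℕ → ℕ → S) (B : Set S) (g : ℕ → ℕ × (ℕ → S) × (ℕ → Finset ℕ)) (n : ℕ) : Prop :=
  (∀ k < n, 1 ≤ (g k).1) ∧
  (∀ k < n, ∀ i ∈ Finset.Icc 1 (g k).1, ((g k).2.2 i).Nonempty) ∧
  (∀ k < n, ∀ i, 1 ≤ i → i + 1 ≤ (g k).1 →
    ∀ s ∈ (g k).2.2 i, ∀ t ∈ (g k).2.2 (i + 1), s < t) ∧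
  (∀ k₁, ∀ k₂ < n, k₁ < k₂ → ∀ i₁ ∈ Finset.Icc 1 (g k₁).1, ∀ i₂ ∈ Finset.Icc 1 (g k₂).1,
    ∀ s ∈ (g k₁).2.2 i₁, ∀ t ∈ (g k₂).2.2 i₂, s < t) ∧
  (∀ F : Finset ℕ, F.Nonempty → (∀ k ∈ F, k < n) → ∀ f : ℕ → ℕ, (∀ i, f i ≤ i) →
    ∃ s ∈ B, sortedProd (fun k => bp (y (f k)) (g k).1 (g k).2.1 (g k).2.2) F = ↑s)

lemma Inv_zero (y : ℕ → ℕ → S) (B : Set S) (g : ℕ → ℕ × (ℕ → S) × (ℕ → Finset ℕ)) :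
    Inv y B g 0 := by
  refine ⟨fun k hk => by omega, fun k hk => by omega, fun k hk => by omega,
    fun k₁ k₂ hk₂ => by omega, fun F hF hsub f hf => ?_⟩
  obtain ⟨a, ha⟩ := hF
  exact absurd (hsub a ha) (by omega)

lemma Inv_congr {y : ℕ → ℕ → S} {B : Set S} {g₁ g₂ : ℕ → ℕ × (ℕ → S) × (ℕ → Finset ℕ)} {n : ℕ}
    (h : ∀ k < n, g₁ k = g₂ k) (hI : Inv y B g₁ n) : Inv y B g₂ n := by
  obtain ⟨h1, h2, h3, h4, h5⟩ := hI
  refine ⟨fun k hk => h k hk ▸ h1 k hk, fun k hk => h k hk ▸ h2 k hk,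
    fun k hk => h k hk ▸ h3 k hk,
    fun k₁ k₂ hk₂ hlt => ?_, fun F hF hsub f hf => ?_⟩
  · rw [← h k₁ (by omega), ← h k₂ hk₂]
    exact h4 k₁ k₂ hk₂ hlt
  · obtain ⟨s, hsB, hs⟩ := h5 F hF hsub f hf
    refine ⟨s, hsB, ?_⟩
    rw [← hs]
    exact (sortedProd_congr fun k hk => by rw [h k (hsub k hk)]).symm

lemma step_lemma (p : Ultrafilter S)
    (hp : p = p * p) (hmin : ∀ q : Ultrafilter S, ∃ r : Ultrafilter S, r * q * p = p)
    (y : ℕ → ℕ → S) {B : Set S} (hB : B ∈ p)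
    (hshift : ∀ x ∈ B, {z | x * z ∈ B} ∈ p)
    (g : ℕ → ℕ × (ℕ → S) × (ℕ → Finset ℕ)) (n : ℕ) (hInv : Inv y B g n) :
    ∃ d, Inv y B (Function.update g n d) (n + 1) := by
  classical
  obtain ⟨hI1, hI2, hI3, hI4, hI5⟩ := hInv
  set N : ℕ := (Finset.range n).sup
    (fun k => (Finset.Icc 1 (g k).1).sup fun i => ((g k).2.2 i).sup id) with hN
  have hNbound : ∀ k < n, ∀ i ∈ Finset.Icc 1 (g k).1, ∀ s ∈ (g k).2.2 i, s ≤ N := by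
    intro k hk i hi s hs
    calc s = id s := rfl
    _ ≤ ((g k).2.2 i).sup id := Finset.le_sup hs
    _ ≤ (Finset.Icc 1 (g k).1).sup (fun i => ((g k).2.2 i).sup id) :=
        Finset.le_sup (f := fun i => ((g k).2.2 i).sup id) hi
    _ ≤ N := Finset.le_sup (f := fun k => (Finset.Icc 1 (g k).1).sup
        fun i => ((g k).2.2 i).sup id) (Finset.mem_range.2 hk)
  set SS : Finset (Finset ℕ) := (Finset.range n).powerset.filter Finset.Nonempty with hSS
  set FF : Finset (∀ a ∈ Finset.range n, ℕ) :=
    (Finset.range n).pi (fun a => Finset.range (a + 1)) with hFF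
  set fσ : (∀ a ∈ Finset.range n, ℕ) → ℕ → ℕ :=
    fun σ i => if h : i ∈ Finset.range n then σ i h else 0 with hfσ
  set Tr : Finset ℕ → (∀ a ∈ Finset.range n, ℕ) → Set S := fun F σ =>
    {z | ∀ s : S, sortedProd
      (fun k => bp (y (fσ σ k)) (g k).1 (g k).2.1 (g k).2.2) F = ↑s → s * z ∈ B} with hTr
  set C : Set S := B ∩ ⋂ F ∈ SS, ⋂ σ ∈ FF, Tr F σ with hC
  have hCB : C ⊆ B := Set.inter_subset_left
  have hCp : C ∈ p := by
    refine Ultrafilter.mem_coe.1 (Filter.inter_mem (Ultrafilter.mem_coe.2 hB) ?_)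
    refine (Filter.biInter_finset_mem SS).2 fun F hF => ?_
    refine (Filter.biInter_finset_mem FF).2 fun σ hσ => ?_
    rw [hSS, Finset.mem_filter, Finset.mem_powerset] at hF
    have hfa : ∀ i, fσ σ i ≤ i := by
      intro i
      show (if h : i ∈ Finset.range n then σ i h else 0) ≤ i
      by_cases h : i ∈ Finset.range n
      · rw [dif_pos h]
        have := (Finset.mem_pi.1 (by rwa [hFF] at hσ)) i h
        rw [Finset.mem_range] at this
        omega
      · rw [dif_neg h]; omega
    obtain ⟨s₀, hs₀B, hs₀⟩ := hI5 F hF.2 (fun k hk => Finset.mem_range.1 (hF.1 hk)) (fσ σ) hfa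
    refine Filter.mem_of_superset (Ultrafilter.mem_coe.2 (hshift s₀ hs₀B)) ?_
    intro z hz
    intro s hs
    have hss : s = s₀ := WithOne.coe_inj.1 (hs.symm.trans hs₀)
    rw [hss]
    exact hz
  obtain ⟨m, a, H, ⟨hm, hne, hord, hbig⟩, hprod⟩ := key_lemma p hp hmin y n N hCp
  refine ⟨(m, a, H), ?_⟩
  set G := Function.update g n (m, a, H) with hG
  have hGn : G n = (m, a, H) := Function.update_self n _ g
  have hGk : ∀ k, k ≠ n → G k = g k := fun k hk => Function.update_of_ne hk _ g
  have hGlt : ∀ k, k < n → G k = g k := fun k hk => hGk k (by omega)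
  refine ⟨?_, ?_, ?_, ?_, ?_⟩
  · intro k hk
    by_cases h : k < n
    · rw [hGlt k h]; exact hI1 k h
    · have : k = n := by omega
      subst this
      rw [hGn]
      exact hm
  · intro k hk
    by_cases h : k < n
    · rw [hGlt k h]; exact hI2 k h
    · have : k = n := by omega
      subst this
      rw [hGn]
      exact hne
  · intro k hk
    by_cases h : k < n
    · rw [hGlt k h]; exact hI3 k h
    · have : k = n := by omega
      subst this
      rw [hGn]
      exact hord
  · intro k₁ k₂ hk₂ hlt i₁ hi₁ i₂ hi₂ s hs t ht
    by_cases h : k₂ < n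
    · rw [hGlt k₂ h] at hi₂ ht
      rw [hGlt k₁ (by omega)] at hi₁ hs
      exact hI4 k₁ k₂ h hlt i₁ hi₁ i₂ hi₂ s hs t ht
    · have : k₂ = n := by omega
      subst this
      rw [hGn] at hi₂ ht
      rw [hGlt k₁ (by omega)] at hi₁ hs
      have h1 : s ≤ N := hNbound k₁ (by omega) i₁ hi₁ s hs
      have h2 : N < t := hbig i₂ hi₂ t ht
      omega
  · intro F hF hsub f hf
    by_cases hn : n ∈ F
    · set F' := F.erase n with hF'
      have hF'lt : ∀ k ∈ F', k < n := by
        intro k hk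
        rw [hF', Finset.mem_erase] at hk
        have := hsub k hk.2
        omega
      obtain ⟨s, hsC, hs⟩ := hprod (f n) (hf n)
      rcases F'.eq_empty_or_nonempty with hFe | hFne
      · have hFn : F = {n} := by
          ext k
          simp only [Finset.mem_singleton]
          constructor
          · intro hk
            by_contra hkn
            have : k ∈ F' := by rw [hF', Finset.mem_erase]; exact ⟨hkn, hk⟩
            rw [hFe] at this
            simp at this
          · rintro rfl; exact hn
        refine ⟨s, hCB hsC, ?_⟩
        rw [hFn, sortedProd_singleton, hGn]
        exact hs
      · have hins : F = insert n F' := (Finset.insert_erase hn).symm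
        obtain ⟨s', hs'B, hs'⟩ := hI5 F' hFne hF'lt f hf
        have hcongr : sortedProd (fun k => bp (y (f k)) (G k).1 (G k).2.1 (G k).2.2) F'
            = sortedProd (fun k => bp (y (f k)) (g k).1 (g k).2.1 (g k).2.2) F' :=
          sortedProd_congr fun k hk => by rw [hGlt k (hF'lt k hk)]
        -- membership of s in the translate set
        have hF'SS : F' ∈ SS := by
          rw [hSS, Finset.mem_filter, Finset.mem_powerset]
          exact ⟨fun k hk => Finset.mem_range.2 (hF'lt k hk), hFne⟩
        have hσ : (fun i (_ : i ∈ Finset.range n) => f i) ∈ FF := by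
          rw [hFF, Finset.mem_pi]
          intro i hi
          rw [Finset.mem_range]
          have := hf i
          omega
        have hsTr : s ∈ Tr F' (fun i _ => f i) := by
          have := hsC.2
          have h1 := Set.mem_iInter₂.1 this F' hF'SS
          exact Set.mem_iInter₂.1 h1 _ hσ
        have hfσf : ∀ k ∈ F', fσ (fun i _ => f i) k = f k := by
          intro k hk
          show (if h : k ∈ Finset.range n then f k else 0) = f k
          rw [dif_pos (Finset.mem_range.2 (hF'lt k hk))]
        have hprodTr : sortedProd (fun k => bp (y (fσ (fun i _ => f i) k))
            (g k).1 (g k).2.1 (g k).2.2) F' = ↑s' := by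
          rw [← hs']
          exact sortedProd_congr fun k hk => by rw [hfσf k hk]
        have hmem : s' * s ∈ B := hsTr s' hprodTr
        refine ⟨s' * s, hmem, ?_⟩
        rw [hins, sortedProd_insert_max (fun t ht => hF'lt t ht), hcongr, hs', hGn]
        rw [hs, ← WithOne.coe_mul]
    · have hsub' : ∀ k ∈ F, k < n := by
        intro k hk
        have := hsub k hk
        have : k ≠ n := fun h => hn (h ▸ hk)
        omega
      obtain ⟨s, hsB, hs⟩ := hI5 F hF hsub' f hf
      refine ⟨s, hsB, ?_⟩
      rw [← hs]
      exact sortedProd_congr fun k hk => by rw [hGlt k (hsub' k hk)]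

end CST

/-- The Central Sets Theorem for an arbitrary semigroup
(Hindman–Strauss, Theorem 14.14.9 form). -/
theorem central_sets_theorem_semigroup {S : Type*} [Semigroup S]
    (A : Set S) (hA : IsCentral A)
    (y : ℕ → ℕ → S) :
    ∃ (m : ℕ → ℕ) (a : ℕ → ℕ → S) (H : ℕ → ℕ → Finset ℕ),
      -- (1): m(n) ∈ ℕ = {1,2,…}
      (∀ n, 1 ≤ m n) ∧
      -- (3): each Hₙ(i), 1 ≤ i ≤ m(n), is a nonempty finite subset of ℕ
      (∀ n, ∀ i ∈ Finset.Icc 1 (m n), (H n i).Nonempty) ∧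
      -- (4): max Hₙ(i) < min Hₙ(i+1) for 1 ≤ i ≤ m(n) - 1
      (∀ n, ∀ i : ℕ, 1 ≤ i → i + 1 ≤ m n →
        ∀ s ∈ H n i, ∀ t ∈ H n (i + 1), s < t) ∧
      -- (5): max Hₙ(m(n)) < min Hₙ₊₁(1)
      (∀ n, ∀ s ∈ H n (m n), ∀ t ∈ H (n + 1) 1, s < t) ∧
      -- (6): for each F ∈ 𝒫_f(ℕ) and each f ∈ Φ
      (∀ F : Finset ℕ, F.Nonempty → ∀ f : ℕ → ℕ, (∀ n, f n ≤ n) →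
        sortedProd (fun n =>
          sortedProd (fun i =>
              (a n i : WithOne S) *
                sortedProd (fun t => (y (f n) t : WithOne S)) (H n i))
            (Finset.Icc 1 (m n)) *
          (a n (m n + 1) : WithOne S)) F
        ∈ (fun s : S => (s : WithOne S)) '' A) := by
  classical
  obtain ⟨p, hp, hmin, hAp⟩ := hA
  set Astar : Set S := {x | x ∈ A ∧ {z | x * z ∈ A} ∈ p} with hAstar_def
  have hAsub : Astar ⊆ A := fun x hx => hx.1
  have hAstar_mem : Astar ∈ p := by
    have h0 : A ∈ p * p := hp ▸ hAp
    have h2 : {x | {z | x * z ∈ A} ∈ p} ∈ p := CST.mem_mul.1 h0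
    exact Ultrafilter.mem_coe.1
      (Filter.inter_mem (Ultrafilter.mem_coe.2 hAp) (Ultrafilter.mem_coe.2 h2))
  have hshift : ∀ x ∈ Astar, {z | x * z ∈ Astar} ∈ p := by
    intro x hx
    have h1 : {z | x * z ∈ A} ∈ p := hx.2
    have h3 : {z | x * z ∈ A} ∈ p * p := hp ▸ h1
    have h4 := CST.mem_mul.1 h3
    have h5 : {z | {w | (x * z) * w ∈ A} ∈ p} ∈ p := by
      have heq : {u : S | {w | u * w ∈ {z : S | x * z ∈ A}} ∈ p}
          = {z : S | {w | (x * z) * w ∈ A} ∈ p} := by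
        ext u
        simp only [Set.mem_setOf_eq, mul_assoc]
      rwa [heq] at h4
    have h6 : {z | x * z ∈ Astar} = {z | x * z ∈ A} ∩ {z | {w | (x * z) * w ∈ A} ∈ p} := rfl
    rw [h6]
    exact Ultrafilter.mem_coe.1
      (Filter.inter_mem (Ultrafilter.mem_coe.2 h1) (Ultrafilter.mem_coe.2 h5))
  obtain ⟨c₀, _⟩ := Ultrafilter.nonempty_of_mem hAp
  set d₀ : ℕ × (ℕ → S) × (ℕ → Finset ℕ) := (1, fun _ => c₀, fun _ => {0}) with hd₀
  have step : ∀ (g : ℕ → ℕ × (ℕ → S) × (ℕ → Finset ℕ)) (n : ℕ), CST.Inv y Astar g n →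
      ∃ d, CST.Inv y Astar (Function.update g n d) (n + 1) :=
    fun g n h => CST.step_lemma p hp hmin y hAstar_mem hshift g n h
  obtain ⟨G, hG⟩ : ∃ G : ℕ → ℕ × (ℕ → S) × (ℕ → Finset ℕ), ∀ n, CST.Inv y Astar G n := by
    let chain : (n : ℕ) → {g : ℕ → ℕ × (ℕ → S) × (ℕ → Finset ℕ) // CST.Inv y Astar g n} :=
      fun n => Nat.rec (motive := fun n => {g : ℕ → ℕ × (ℕ → S) × (ℕ → Finset ℕ) //
          CST.Inv y Astar g n})
        ⟨fun _ => d₀, CST.Inv_zero y Astar _⟩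
        (fun n ih => ⟨Function.update ih.1 n (Classical.choose (step ih.1 n ih.2)),
          Classical.choose_spec (step ih.1 n ih.2)⟩) n
    have hchainsucc : ∀ n, ∃ d, (chain (n + 1)).1 = Function.update (chain n).1 n d :=
      fun n => ⟨_, rfl⟩
    have hagree : ∀ n k, k < n → (chain n).1 k = (chain (k + 1)).1 k := by
      intro n
      induction n with
      | zero => intro k hk; omega
      | succ n ih =>
        intro k hk
        by_cases hkn : k < n
        · obtain ⟨d, hd⟩ := hchainsucc n
          rw [hd, Function.update_of_ne (by omega)]
          exact ih k hkn
        · have hk' : k = n := by omega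
          subst hk'
          rfl
    refine ⟨fun k => (chain (k + 1)).1 k, fun n => ?_⟩
    exact CST.Inv_congr (fun k hk => hagree n k hk) (chain n).2
  refine ⟨fun n => (G n).1, fun n => (G n).2.1, fun n => (G n).2.2, ?_, ?_, ?_, ?_, ?_⟩
  · exact fun n => (hG (n + 1)).1 n (by omega)
  · exact fun n => (hG (n + 1)).2.1 n (by omega)
  · exact fun n i h1 h2 => (hG (n + 1)).2.2.1 n (by omega) i h1 h2
  · intro n s hs t ht
    have h1 : 1 ≤ (G n).1 := (hG (n + 1)).1 n (by omega)
    have h2 : 1 ≤ (G (n + 1)).1 := (hG (n + 2)).1 (n + 1) (by omega)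
    exact (hG (n + 2)).2.2.2.1 n (n + 1) (by omega) (by omega)
      ((G n).1) (Finset.mem_Icc.2 ⟨h1, le_refl _⟩) 1 (Finset.mem_Icc.2 ⟨le_refl _, h2⟩) s hs t ht
  · intro F hF f hf
    have hn : ∀ k ∈ F, k < F.max' hF + 1 := fun k hk => by
      have := Finset.le_max' F k hk; omega
    obtain ⟨s, hsA, hs⟩ := (hG (F.max' hF + 1)).2.2.2.2 F hF hn f hf
    exact ⟨s, hAsub hsA, hs.symm⟩
end
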